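/- arXiv:2601.11372 — 12 statements merged into one kernel-verified Lean document; each statement's English description precedes it below -/
import Mathlib

section
/- Let X = (X_1, …, X_n) be an EFx allocation of a finite item set M among n ≥ 1 agents who share an additive valuation v : M → ℕ, and let x_(1), x_(2), …, x_(m) be the items of M sorted by non-increasing value. Then for every agent a_j, n · v(X_j) ≥ v(M) − Σ_{t=1}^{min(n−1, m)} v(x_(t)); equivalently, v(M) ≤ n · v(X_j) + (sum of the n−1 largest item values). -/
lemma sum_le_take_sum {ι : Type*} [Fintype ι] [DecidableEq ι] (v : ι → ℕ) (L : List ι)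
    (hnodup : L.Nodup) (hall : ∀ x : ι, x ∈ L) (hsorted : (L.map v).Pairwise (· ≥ ·))
    (k : ℕ) (S : Finset ι) (hcard : S.card ≤ k) :
    S.sum v ≤ ((L.take k).map v).sum := by
  classical
  set T : Finset ι := (L.take k).toFinset with hT
  have htnodup : (L.take k).Nodup := hnodup.sublist (List.take_sublist _ _)
  have hTsum : T.sum v = ((L.take k).map v).sum := by
    rw [hT, List.sum_toFinset _ htnodup]
  rw [← hTsum]
  by_cases hlen : L.length ≤ k
  · have : L.take k = L := List.take_of_length_le hlen
    apply Finset.sum_le_sum_of_subset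
    intro x _
    rw [hT, this, List.mem_toFinset]; exact hall x
  · push_neg at hlen
    have hTcard : T.card = k := by
      rw [hT, List.toFinset_card_of_nodup htnodup, List.length_take]
      omega
    -- compare values across take/drop
    have hcross : ∀ a ∈ S \ T, ∀ b ∈ T \ S, v a ≤ v b := by
      intro a ha b hb
      have ha' := Finset.mem_sdiff.mp ha
      have hb' := Finset.mem_sdiff.mp hb
      have hbt : b ∈ L.take k := by
        have := hb'.1; rwa [hT, List.mem_toFinset] at this
      have had : a ∈ L.drop k := by
        have haL := hall a
        rw [← List.take_append_drop k L, List.mem_append] at haL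
        rcases haL with h | h
        · exact absurd (by rwa [hT, List.mem_toFinset]) ha'.2
        · exact h
      have : (L.map v) = (L.take k).map v ++ (L.drop k).map v := by
        rw [← List.map_append, List.take_append_drop]
      rw [this] at hsorted
      have := (List.pairwise_append.mp hsorted).2.2
      exact this (v b) (List.mem_map_of_mem (f := v) hbt) (v a) (List.mem_map_of_mem (f := v) had)
    have hcards : (S \ T).card ≤ (T \ S).card := by
      have h1 := Finset.card_sdiff_add_card_inter S T
      have h2 := Finset.card_sdiff_add_card_inter T S
      rw [Finset.inter_comm T S] at h2
      omega
    have hdiff : (S \ T).sum v ≤ (T \ S).sum v := by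
      rcases Finset.eq_empty_or_nonempty (T \ S) with he | hne
      · have : (S \ T).card = 0 := by rw [he] at hcards; simpa using hcards
        rw [Finset.card_eq_zero.mp this, he]
      · have hWne : ((T \ S).image v).Nonempty := hne.image v
        set m := ((T \ S).image v).min' hWne with hm
        obtain ⟨b, hb, hbm⟩ := Finset.mem_image.mp (((T \ S).image v).min'_mem hWne)
        calc (S \ T).sum v ≤ (S \ T).card • m := by
              apply Finset.sum_le_card_nsmul
              intro a ha; rw [hm, ← hbm]; exact hcross a ha b hb
          _ ≤ (T \ S).card • m := by
              exact nsmul_le_nsmul_left (Nat.zero_le m) hcards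
          _ ≤ (T \ S).sum v := by
              apply Finset.card_nsmul_le_sum
              intro x hx
              exact Finset.min'_le _ _ (Finset.mem_image_of_mem v hx)
    calc S.sum v = (S ∩ T).sum v + (S \ T).sum v := (Finset.sum_inter_add_sum_sdiff S T v).symm
      _ ≤ (S ∩ T).sum v + (T \ S).sum v := by omega
      _ = (T ∩ S).sum v + (T \ S).sum v := by rw [Finset.inter_comm]
      _ = T.sum v := Finset.sum_inter_add_sum_sdiff T S v

/-- In an EFx allocation of a finite item set among `n ≥ 1` agents sharing an
additive valuation `v`, if `L` enumerates the items sorted by non-increasing value, then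
for every agent `j`: `v(M) ≤ n * v(X j) + (sum of the n−1 largest item values)`,
i.e. `n * v(X j) ≥ v(M) − Σ_{t=1}^{min(n−1,m)} v(x_(t))`. -/
theorem efx_bundle_lower_bound
    {ι : Type*} [Fintype ι] [DecidableEq ι] {n : ℕ} (hn : 1 ≤ n)
    (v : ι → ℕ) (X : Fin n → Finset ι)
    (hdisj : ∀ i j : Fin n, i ≠ j → Disjoint (X i) (X j))
    (hcover : ∀ x : ι, ∃ i : Fin n, x ∈ X i)
    (hefx : ∀ i j : Fin n, ∀ x ∈ X j, ((X j).erase x).sum v ≤ (X i).sum v)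
    (L : List ι) (hnodup : L.Nodup) (hall : ∀ x : ι, x ∈ L)
    (hsorted : (L.map v).Pairwise (· ≥ ·)) :
    ∀ j : Fin n, ∑ x : ι, v x ≤ n * (X j).sum v + ((L.take (n - 1)).map v).sum := by
  classical
  intro j
  rcases isEmpty_or_nonempty ι with hι | hι
  · simp
  -- total = sum of bundle sums
  have htotal : ∑ x : ι, v x = ∑ i : Fin n, (X i).sum v := by
    rw [← Finset.sum_biUnion (fun a _ b _ hab => hdisj a b hab)]
    congr 1
    ext x
    simpa using hcover x
  -- choice of a witness item in each nonempty bundle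
  set pick : Fin n → ι := fun i =>
    if h : (X i).Nonempty then h.choose else Classical.arbitrary ι with hpick
  have hpickmem : ∀ i : Fin n, (X i).Nonempty → pick i ∈ X i := by
    intro i h
    simp only [hpick, dif_pos h]
    exact h.choose_spec
  set I : Finset (Fin n) := (Finset.univ.erase j).filter (fun i => (X i).Nonempty) with hI
  set S : Finset ι := I.image pick with hS
  -- per-bundle bound
  have hbound : ∀ i ∈ Finset.univ.erase j,
      (X i).sum v ≤ (X j).sum v + (if (X i).Nonempty then v (pick i) else 0) := by
    intro i _
    by_cases h : (X i).Nonempty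
    · rw [if_pos h]
      have hm := hpickmem i h
      have := hefx j i (pick i) hm
      have heq : ((X i).erase (pick i)).sum v + v (pick i) = (X i).sum v :=
        Finset.sum_erase_add _ _ hm
      omega
    · rw [if_neg h, Finset.not_nonempty_iff_eq_empty.mp h]
      simp
  have hSsum : ∑ i ∈ I, v (pick i) = S.sum v := by
    rw [hS, Finset.sum_image]
    intro a ha b hb hab
    by_contra hne
    have hma : pick a ∈ X a := hpickmem a (Finset.mem_filter.mp ha).2
    have hmb : pick b ∈ X b := hpickmem b (Finset.mem_filter.mp hb).2
    exact Finset.disjoint_left.mp (hdisj a b hne) hma (hab.symm ▸ hmb)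
  have hScard : S.card ≤ n - 1 := by
    calc S.card ≤ I.card := Finset.card_image_le
      _ ≤ (Finset.univ.erase j).card := Finset.card_filter_le _ _
      _ = n - 1 := by rw [Finset.card_erase_of_mem (Finset.mem_univ j)]; simp
  have hStop : S.sum v ≤ ((L.take (n - 1)).map v).sum :=
    sum_le_take_sum v L hnodup hall hsorted (n - 1) S hScard
  have hsplit : ∑ i : Fin n, (X i).sum v
      = (X j).sum v + ∑ i ∈ Finset.univ.erase j, (X i).sum v := by
    exact (Finset.add_sum_erase _ _ (Finset.mem_univ j)).symm
  have hmain : ∑ i ∈ Finset.univ.erase j, (X i).sum v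
      ≤ (n - 1) * (X j).sum v + S.sum v := by
    calc ∑ i ∈ Finset.univ.erase j, (X i).sum v
        ≤ ∑ i ∈ Finset.univ.erase j,
            ((X j).sum v + (if (X i).Nonempty then v (pick i) else 0)) :=
          Finset.sum_le_sum hbound
      _ = (n - 1) * (X j).sum v
            + ∑ i ∈ Finset.univ.erase j, (if (X i).Nonempty then v (pick i) else 0) := by
          rw [Finset.sum_add_distrib, Finset.sum_const, smul_eq_mul,
            Finset.card_erase_of_mem (Finset.mem_univ j)]
          simp
      _ = (n - 1) * (X j).sum v + ∑ i ∈ I, v (pick i) := by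
          congr 1
          rw [hI, Finset.sum_filter]
      _ = (n - 1) * (X j).sum v + S.sum v := by rw [hSsum]
  have hn1 : (n - 1) * (X j).sum v + (X j).sum v = n * (X j).sum v := by
    conv_rhs => rw [← Nat.succ_pred_eq_of_pos hn]
    rw [Nat.succ_mul]; rfl
  omega
end

section
/- Let M be a finite set of m items allocated among n agents with (possibly differing) additive valuations v_i : M → ℕ. If n ≥ m and there is an item x* ∈ M that is positively valued by at least m agents (i.e., |{i : v_i(x*) > 0}| ≥ m), then in every EFx allocation X = (X_1, …, X_n) the bundle containing x* is exactly the singleton {x*}. -/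
open Finset in
/-- With `n ≥ m` agents having (possibly differing) additive valuations, if an
item `x*` is positively valued by at least `m` agents, then in every EFx allocation the
bundle containing `x*` is exactly the singleton `{x*}`. -/
theorem efx_singleton_of_many_positive_valuers
    {ι : Type*} [Fintype ι] [DecidableEq ι] {n : ℕ}
    (hnm : Fintype.card ι ≤ n)
    (v : Fin n → ι → ℕ) (xstar : ι)
    (hval : Fintype.card ι ≤ (univ.filter (fun i : Fin n => 0 < v i xstar)).card)
    (X : Fin n → Finset ι)
    (hdisj : ∀ i j : Fin n, i ≠ j → Disjoint (X i) (X j))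
    (hcover : ∀ x : ι, ∃ i : Fin n, x ∈ X i)
    (hefx : ∀ i j : Fin n, ∀ x ∈ X j, ((X j).erase x).sum (v i) ≤ (X i).sum (v i)) :
    ∀ j : Fin n, xstar ∈ X j → X j = {xstar} := by
  intro j hxj
  by_contra hne
  -- there is y ∈ X j with y ≠ xstar
  obtain ⟨y, hy, hyx⟩ : ∃ y ∈ X j, y ≠ xstar := by
    by_contra h
    push_neg at h
    exact hne (Finset.eq_singleton_iff_unique_mem.mpr ⟨hxj, h⟩)
  set S : Finset (Fin n) := univ.filter (fun i : Fin n => 0 < v i xstar) with hS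
  -- every agent in S has a nonempty bundle
  have hnonempty : ∀ i ∈ S, (X i).Nonempty := by
    intro i hi
    have hpos : 0 < v i xstar := (Finset.mem_filter.mp hi).2
    have hmem : xstar ∈ (X j).erase y := Finset.mem_erase.mpr ⟨Ne.symm hyx, hxj⟩
    have h1 : v i xstar ≤ ((X j).erase y).sum (v i) :=
      Finset.single_le_sum (fun _ _ => Nat.zero_le _) hmem
    have h2 := hefx i j y hy
    have : 0 < (X i).sum (v i) := lt_of_lt_of_le hpos (le_trans h1 h2)
    rcases Finset.eq_empty_or_nonempty (X i) with he | hne'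
    · simp [he] at this
    · exact hne'
  set T : Finset (Fin n) := insert j S with hT
  have hjT : j ∈ T := Finset.mem_insert_self _ _
  have hnonemptyT : ∀ i ∈ T, (X i).Nonempty := by
    intro i hi
    rcases Finset.mem_insert.mp hi with rfl | hi
    · exact ⟨xstar, hxj⟩
    · exact hnonempty i hi
  have hcardT : Fintype.card ι ≤ T.card :=
    le_trans hval (Finset.card_le_card (Finset.subset_insert _ _))
  -- sum of sizes over T
  have hsum_le : ∑ i ∈ T, (X i).card ≤ Fintype.card ι := by
    rw [← Finset.card_biUnion (fun a ha b hb hab => hdisj a b hab)]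
    exact Finset.card_le_card (Finset.subset_univ _) |>.trans_eq (by simp)
  have hsum_gt : T.card < ∑ i ∈ T, (X i).card := by
    have := Finset.sum_lt_sum (f := fun _ : Fin n => 1) (g := fun i => (X i).card)
      (fun i hi => Finset.one_le_card.mpr (hnonemptyT i hi))
      ⟨j, hjT, Finset.one_lt_card.mpr ⟨xstar, hxj, y, hy, Ne.symm hyx⟩⟩
    simpa using this
  have := lt_of_lt_of_le (lt_of_le_of_lt hcardT hsum_gt) hsum_le
  exact lt_irrefl _ this
end

section
/- Let M be a finite set of m items and let n ≥ m agents share an additive valuation v : M → ℕ with v(x) > 0 for every item x ∈ M, and let each agent a_i have an additive cost function c_i : M → ℕ. Then the minimum total cost Σ_i c_i(X_i) over all EFx allocations X = (X_1, …, X_n) equals the minimum over all injective functions σ : M → A of Σ_{x ∈ M} c_{σ(x)}(x), i.e., the cost of an optimal matching assigning each item alone to a distinct agent. -/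
/-- With `n ≥ m` agents sharing an additive valuation with all items positively
valued, and agent-specific additive cost functions `c i`, the minimum total cost over all
EFx allocations equals the minimum over all injections `σ : M → A` of `Σ_{x ∈ M} c (σ x) x`
(the cost of an optimal matching assigning each item alone to a distinct agent). -/
theorem minCost_efx_eq_min_matching
    {ι : Type*} [Fintype ι] [DecidableEq ι] {n : ℕ}
    (hnm : Fintype.card ι ≤ n)
    (v : ι → ℕ) (hpos : ∀ x : ι, 0 < v x)
    (c : Fin n → ι → ℕ) :
    sInf {k : ℕ | ∃ X : Fin n → Finset ι,
        (∀ i j : Fin n, i ≠ j → Disjoint (X i) (X j)) ∧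
        (∀ x : ι, ∃ i : Fin n, x ∈ X i) ∧
        (∀ i j : Fin n, ∀ x ∈ X j, ((X j).erase x).sum v ≤ (X i).sum v) ∧
        ∑ i : Fin n, (X i).sum (c i) = k} =
    sInf {k : ℕ | ∃ σ : ι → Fin n, Function.Injective σ ∧ ∑ x : ι, c (σ x) x = k} := by
  congr 1
  ext k
  simp only [Set.mem_setOf_eq]
  constructor
  · rintro ⟨X, hdisj, hcov, hefx, rfl⟩
    choose σ hσ using hcov
    have hmem : ∀ i x, x ∈ X i ↔ σ x = i := by
      intro i x
      constructor
      · intro hx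
        by_contra h
        exact Finset.disjoint_left.1 (hdisj i (σ x) (Ne.symm h)) hx (hσ x)
      · rintro rfl; exact hσ x
    have hfib : ∀ i, X i = Finset.univ.filter (fun x => σ x = i) := by
      intro i; ext x; simp [hmem i x]
    have hcard : ∑ i, (X i).card = Fintype.card ι := by
      simp_rw [hfib]
      rw [← Finset.card_eq_sum_card_fiberwise (fun x _ => Finset.mem_univ (σ x))]
      rfl
    have hsub : ∀ j : Fin n, ∀ x ∈ X j, ∀ y ∈ X j, x = y := by
      intro j x hx y hy
      by_contra hxy
      have hne : ∃ i, X i = ∅ := by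
        by_contra h
        push_neg at h
        have h1 : ∀ i, 1 ≤ (X i).card := fun i =>
          Finset.card_pos.2 (h i)
        have h2 : 2 ≤ (X j).card := Finset.one_lt_card.2 ⟨x, hx, y, hy, hxy⟩
        have hle : ∑ i : Fin n, (if i = j then 2 else 1) ≤ ∑ i, (X i).card := by
          apply Finset.sum_le_sum
          intro i _
          by_cases hij : i = j
          · subst hij; simp [h2]
          · simp [hij, h1 i]
        have heq : ∀ i : Fin n, (if i = j then 2 else 1) = 1 + (if i = j then 1 else 0) := by
          intro i; split <;> rfl
        have hval : ∑ i : Fin n, (if i = j then 2 else 1) = n + 1 := by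
          simp_rw [heq, Finset.sum_add_distrib, Finset.sum_ite_eq' Finset.univ j (fun _ => 1)]
          simp
        omega
      obtain ⟨i, hi⟩ := hne
      have hle := hefx i j x hx
      rw [hi] at hle
      simp only [Finset.sum_empty, Nat.le_zero] at hle
      have hy' : y ∈ (X j).erase x := Finset.mem_erase.2 ⟨fun hh => hxy hh.symm, hy⟩
      have hpos' : 0 < ((X j).erase x).sum v :=
        Finset.sum_pos' (fun _ _ => Nat.zero_le _) ⟨y, hy', hpos y⟩
      omega
    refine ⟨σ, ?_, ?_⟩
    · intro x y hxy
      exact hsub (σ x) x (hσ x) y ((hmem _ y).2 hxy.symm)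
    · rw [← Finset.sum_fiberwise_of_maps_to (g := σ) (fun x _ => Finset.mem_univ (σ x))
        (f := fun x => c (σ x) x)]
      apply Finset.sum_congr rfl
      intro i _
      rw [hfib i]
      apply Finset.sum_congr rfl
      intro x hx
      rw [(Finset.mem_filter.1 hx).2]
  · rintro ⟨σ, hinj, rfl⟩
    refine ⟨fun i => Finset.univ.filter (fun x => σ x = i), ?_, ?_, ?_, ?_⟩
    · intro i j hij
      rw [Finset.disjoint_left]
      intro x hx hx'
      simp only [Finset.mem_filter] at hx hx'
      exact hij (hx.2 ▸ hx'.2 ▸ rfl)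
    · intro x; exact ⟨σ x, by simp⟩
    · intro i j x hx
      have : (Finset.univ.filter (fun y => σ y = j)).erase x = ∅ := by
        rw [Finset.eq_empty_iff_forall_notMem]
        intro y hy
        rw [Finset.mem_erase, Finset.mem_filter] at hy
        simp only [Finset.mem_filter] at hx
        exact hy.1 (hinj (hy.2.2.trans hx.2.symm))
      rw [this]
      simp
    · rw [← Finset.sum_fiberwise_of_maps_to (g := σ) (fun x _ => Finset.mem_univ (σ x))
        (f := fun x => c (σ x) x)]
      apply Finset.sum_congr rfl
      intro i _
      apply Finset.sum_congr rfl
      intro x hx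
      rw [(Finset.mem_filter.1 hx).2]
end

section
/- Let (A, M, v, (c_i)_{a_i ∈ A}) be an instance with a finite set A of agents, a finite set M of m ≥ 1 items, an additive valuation v : M → ℕ shared by all agents, and an additive cost function c_i : M → ℕ for each agent. Then there exists a nonempty subset A' ⊆ A with |A'| ≤ m³ such that the minimum total cost of an EFx allocation of M among the agents of A' equals the minimum total cost of an EFx allocation of M among the agents of A. -/
open Finset

lemma efx_support_card_le {α ι : Type*} [Fintype α] [DecidableEq α]
    [Fintype ι] [DecidableEq ι] [Nonempty ι] (X : α → Finset ι)
    (hd : ∀ a b : α, a ≠ b → Disjoint (X a) (X b)) :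
    (Finset.univ.filter fun a => (X a).Nonempty).card ≤ Fintype.card ι := by
  classical
  have := Finset.card_le_card_of_injOn
    (s := Finset.univ.filter fun a => (X a).Nonempty) (t := Finset.univ)
    (fun a => if h : (X a).Nonempty then h.choose else Classical.arbitrary ι)
    (fun a _ => Finset.mem_univ _) ?_
  · simpa using this
  · intro a ha b hb hab
    simp only [Finset.coe_filter, Set.mem_setOf_eq, Finset.mem_univ, true_and] at ha hb
    simp only [dif_pos ha, dif_pos hb] at hab
    by_contra hne
    exact Finset.disjoint_left.mp (hd a b hne) ha.choose_spec (hab ▸ hb.choose_spec)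

/-- For any instance with a finite set of agents `α`, a finite set of `m ≥ 1`
items, a shared additive valuation `v` and agent-specific additive costs `c`, there is a
nonempty subset `A'` of the agents with `|A'| ≤ m³` such that the minimum total cost of an
EFx allocation of all items among the agents of `A'` equals the minimum total cost of an
EFx allocation among all agents. -/
theorem efx_agent_kernel
    {α ι : Type*} [Fintype α] [DecidableEq α] [Nonempty α]
    [Fintype ι] [DecidableEq ι] (hm : 1 ≤ Fintype.card ι)
    (v : ι → ℕ) (c : α → ι → ℕ) :
    ∃ A' : Finset α, A'.Nonempty ∧ A'.card ≤ (Fintype.card ι) ^ 3 ∧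
      sInf {k : ℕ | ∃ X : α → Finset ι,
          (∀ a ∉ A', X a = ∅) ∧
          (∀ a b : α, a ≠ b → Disjoint (X a) (X b)) ∧
          (∀ x : ι, ∃ a ∈ A', x ∈ X a) ∧
          (∀ a ∈ A', ∀ b ∈ A', ∀ x ∈ X b, ((X b).erase x).sum v ≤ (X a).sum v) ∧
          ∑ a ∈ A', (X a).sum (c a) = k} =
      sInf {k : ℕ | ∃ X : α → Finset ι,
          (∀ a b : α, a ≠ b → Disjoint (X a) (X b)) ∧
          (∀ x : ι, ∃ a : α, x ∈ X a) ∧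
          (∀ a b : α, ∀ x ∈ X b, ((X b).erase x).sum v ≤ (X a).sum v) ∧
          ∑ a : α, (X a).sum (c a) = k} := by
  classical
  haveI : Nonempty ι := Fintype.card_pos_iff.mp hm
  set m := Fintype.card ι with hmdef
  by_cases hbig : Fintype.card α ≤ m ^ 3
  · -- all agents fit in the budget: take `A' = univ`, the two sets coincide
    refine ⟨Finset.univ, Finset.univ_nonempty, by simpa using hbig, ?_⟩
    congr 1
    ext k
    simp only [Set.mem_setOf_eq]
    constructor
    · rintro ⟨X, -, hd, hcov, hefx, hsum⟩
      refine ⟨X, hd, fun x => ?_, fun a b x hx => hefx a (mem_univ a) b (mem_univ b) x hx, hsum⟩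
      obtain ⟨a, -, h⟩ := hcov x; exact ⟨a, h⟩
    · rintro ⟨X, hd, hcov, hefx, hsum⟩
      exact ⟨X, fun a ha => absurd (mem_univ a) ha, hd,
        fun x => ⟨(hcov x).choose, mem_univ _, (hcov x).choose_spec⟩,
        fun a _ b _ => hefx a b, hsum⟩
  · push_neg at hbig
    -- the set of all-agent EFx allocations is nonempty: give each item to its own agent
    have hmle : m ≤ Fintype.card α :=
      le_of_lt (lt_of_le_of_lt (Nat.le_self_pow (by norm_num) m) hbig)
    obtain ⟨f⟩ : Nonempty (ι ↪ α) := Function.Embedding.nonempty_iff_card_le.mpr hmle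
    set R : Set ℕ := {k : ℕ | ∃ X : α → Finset ι,
          (∀ a b : α, a ≠ b → Disjoint (X a) (X b)) ∧
          (∀ x : ι, ∃ a : α, x ∈ X a) ∧
          (∀ a b : α, ∀ x ∈ X b, ((X b).erase x).sum v ≤ (X a).sum v) ∧
          ∑ a : α, (X a).sum (c a) = k} with hR
    have hRne : R.Nonempty := by
      refine ⟨_, fun a => Finset.univ.filter (fun x => f x = a), ?_, ?_, ?_, rfl⟩
      · intro a b hab
        rw [Finset.disjoint_left]
        intro x hx hx'
        simp only [mem_filter, mem_univ, true_and] at hx hx'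
        exact hab (hx ▸ hx')
      · intro x; exact ⟨f x, by simp⟩
      · intro a b x hx
        simp only [mem_filter, mem_univ, true_and] at hx
        have : (Finset.univ.filter (fun y => f y = b)).erase x = ∅ := by
          ext y
          simp only [mem_erase, mem_filter, mem_univ, true_and, notMem_empty, iff_false, not_and]
          intro hyx hyb
          exact hyx (f.injective (hyb.trans hx.symm))
        rw [this]
        exact Nat.zero_le _
    -- take an optimal all-agent allocation
    obtain ⟨X, hd, hcov, hefx, hsum⟩ : sInf R ∈ R := Nat.sInf_mem hRne
    set S : Finset α := Finset.univ.filter (fun a => (X a).Nonempty) with hSdef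
    have hScard : S.card ≤ m := efx_support_card_le X hd
    set t : ℕ := min (m + 1) (m ^ 3) with htdef
    have hSt : S.card ≤ t :=
      le_min (hScard.trans (Nat.le_succ m)) (hScard.trans (Nat.le_self_pow (by norm_num) m))
    obtain ⟨A', hSA', -, hA'card⟩ :=
      Finset.exists_subsuperset_card_eq (Finset.subset_univ S) hSt
        (by rw [Finset.card_univ]; exact le_of_lt (lt_of_le_of_lt (min_le_right _ _) hbig))
    have hA'ne : A'.Nonempty := by
      rw [← Finset.card_pos, hA'card]
      exact le_min (Nat.succ_le_succ (Nat.zero_le m)) (Nat.one_le_pow _ _ hm)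
    refine ⟨A', hA'ne, hA'card ▸ min_le_right _ _, ?_⟩
    -- key claim: every bundle of an `A'`-feasible EFx allocation has zero value after
    -- removing any of its items
    have claim : ∀ Y : α → Finset ι, (∀ a ∉ A', Y a = ∅) →
        (∀ a b : α, a ≠ b → Disjoint (Y a) (Y b)) →
        (∀ a ∈ A', ∀ b ∈ A', ∀ x ∈ Y b, ((Y b).erase x).sum v ≤ (Y a).sum v) →
        ∀ b : α, ∀ x ∈ Y b, ((Y b).erase x).sum v = 0 := by
      intro Y h0 hd' hefx' b x hx
      by_cases hm1 : m = 1
      · -- only one item: every bundle minus an item is empty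
        haveI : Subsingleton ι := Fintype.card_le_one_iff_subsingleton.mp hm1.le
        have : (Y b).erase x = ∅ := by
          ext y
          simp only [mem_erase, notMem_empty, iff_false, not_and]
          intro hyx
          exact absurd (Subsingleton.elim y x) hyx
        rw [this]; rfl
      · -- at least two items: `A'` has `m+1` agents, so someone gets an empty bundle
        have hm2 : 2 ≤ m := by omega
        have htm : t = m + 1 := by
          refine min_eq_left ?_
          calc m + 1 ≤ 2 * m := by omega
            _ ≤ m * m := Nat.mul_le_mul_right m hm2
            _ ≤ m * m * m := Nat.le_mul_of_pos_right _ (by omega)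
            _ = m ^ 3 := by ring
        set SY : Finset α := Finset.univ.filter (fun a => (Y a).Nonempty) with hSY
        have hSYA' : SY ⊆ A' := by
          intro a ha
          simp only [hSY, mem_filter, mem_univ, true_and] at ha
          by_contra hna
          exact absurd (h0 a hna ▸ ha) Finset.not_nonempty_empty
        have hlt : SY.card < A'.card := by
          rw [hA'card, htm]
          exact Nat.lt_succ_of_le (efx_support_card_le Y hd')
        have hSd : (A' \ SY).Nonempty := by
          rw [← Finset.card_pos, Finset.card_sdiff_of_subset hSYA']
          omega
        obtain ⟨a0, ha0⟩ := hSd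
        rw [Finset.mem_sdiff] at ha0
        obtain ⟨ha0A', ha0SY⟩ := ha0
        have ha0 : Y a0 = ∅ := by
          by_contra h
          exact ha0SY (Finset.mem_filter.mpr
            ⟨mem_univ _, Finset.nonempty_iff_ne_empty.mpr h⟩)
        have hbA' : b ∈ A' := by
          by_contra h
          rw [h0 b h] at hx
          exact absurd hx (Finset.notMem_empty x)
        have := hefx' a0 ha0A' b hbA' x hx
        rw [ha0] at this
        simpa using this
    set L : Set ℕ := {k : ℕ | ∃ X : α → Finset ι,
          (∀ a ∉ A', X a = ∅) ∧
          (∀ a b : α, a ≠ b → Disjoint (X a) (X b)) ∧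
          (∀ x : ι, ∃ a ∈ A', x ∈ X a) ∧
          (∀ a ∈ A', ∀ b ∈ A', ∀ x ∈ X b, ((X b).erase x).sum v ≤ (X a).sum v) ∧
          ∑ a ∈ A', (X a).sum (c a) = k} with hL
    -- the optimal all-agent allocation is `A'`-feasible
    have hXempty : ∀ a ∉ A', X a = ∅ := by
      intro a ha
      rw [← Finset.not_nonempty_iff_eq_empty]
      intro h
      exact ha (hSA' (by simp [hSdef, h]))
    have hsum_eq : ∑ a ∈ A', (X a).sum (c a) = ∑ a : α, (X a).sum (c a) :=
      Finset.sum_subset (Finset.subset_univ A')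
        (fun a _ ha => by rw [hXempty a ha]; rfl)
    have hmemL : sInf R ∈ L := by
      refine ⟨X, hXempty, hd, fun x => ?_, fun a _ b _ => hefx a b, hsum_eq.trans hsum⟩
      obtain ⟨a, ha⟩ := hcov x
      exact ⟨a, hSA' (by simp [hSdef]; exact ⟨x, ha⟩), ha⟩
    have hLne : L.Nonempty := ⟨sInf R, hmemL⟩
    -- every `A'`-feasible allocation is all-agent feasible
    have hLR : L ⊆ R := by
      rintro k ⟨Y, h0, hd', hcov', hefx', hsum'⟩
      refine ⟨Y, hd', fun x => ?_, fun a b x hx => ?_, ?_⟩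
      · obtain ⟨a, -, ha⟩ := hcov' x; exact ⟨a, ha⟩
      · rw [claim Y h0 hd' hefx' b x hx]; exact Nat.zero_le _
      · rw [← hsum']
        exact (Finset.sum_subset (Finset.subset_univ A')
          (fun a _ ha => by rw [h0 a ha]; rfl)).symm
    exact le_antisymm (Nat.sInf_le hmemL) (Nat.sInf_le (hLR (Nat.sInf_mem hLne)))
end

section
/- Let s_1, …, s_m be positive integers with Σ_{i=1}^m s_i = 2T. Construct an instance with two agents and item set M = {x_1, …, x_m, x_min}, where the shared additive valuation is v(x_i) = s_i for i ∈ {1,…,m} and v(x_min) = 0, and the additive costs are c_1(x) = 0 for all x ∈ M, c_2(x_i) = s_i for i ∈ {1,…,m}, and c_2(x_min) = T + 1. Then there exists an EFx allocation (X_1, X_2) of M with total cost c_1(X_1) + c_2(X_2) ≤ T if and only if there exists a subset I ⊆ {1,…,m} with Σ_{i ∈ I} s_i = T. -/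
/-- Shared additive valuation of the constructed instance: item `some i` (i.e. `x_i`) has
value `s i`, the extra item `none` (i.e. `x_min`) has value `0`. -/
def partitionVal {m : ℕ} (s : Fin m → ℕ) : Option (Fin m) → ℕ :=
  fun x => x.elim 0 s

/-- Cost function of agent 1: zero on every item. -/
def partitionCost1 (m : ℕ) : Option (Fin m) → ℕ :=
  fun _ => 0

/-- Cost function of agent 2: `s i` on item `x_i`, and `T + 1` on `x_min`. -/
def partitionCost2 {m : ℕ} (s : Fin m → ℕ) (T : ℕ) : Option (Fin m) → ℕ :=
  fun x => x.elim (T + 1) s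

/-- For positive integers `s_1, …, s_m` with `Σ s_i = 2T`, the constructed
two-agent instance admits an EFx allocation `(X₁, X₂)` of total cost
`c₁(X₁) + c₂(X₂) ≤ T` iff some subset of the `s_i` sums to `T`. -/
theorem partition_reduction
    {m T : ℕ} (s : Fin m → ℕ) (hpos : ∀ i, 0 < s i)
    (hsum : ∑ i, s i = 2 * T) :
    (∃ X1 X2 : Finset (Option (Fin m)),
        Disjoint X1 X2 ∧ (∀ x : Option (Fin m), x ∈ X1 ∨ x ∈ X2) ∧
        (∀ x ∈ X2, (X2.erase x).sum (partitionVal s) ≤ X1.sum (partitionVal s)) ∧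
        (∀ x ∈ X1, (X1.erase x).sum (partitionVal s) ≤ X2.sum (partitionVal s)) ∧
        X1.sum (partitionCost1 m) + X2.sum (partitionCost2 s T) ≤ T) ↔
      ∃ I : Finset (Fin m), ∑ i ∈ I, s i = T := by
  constructor
  · rintro ⟨X1, X2, hdisj, hcover, hE2, hE1, hcost⟩
    have hc1 : X1.sum (partitionCost1 m) = 0 :=
      Finset.sum_eq_zero (fun _ _ => rfl)
    have hnone : (none : Option (Fin m)) ∉ X2 := by
      intro h
      have h1 : partitionCost2 s T none ≤ X2.sum (partitionCost2 s T) :=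
        Finset.single_le_sum (fun _ _ => Nat.zero_le _) h
      have h2 : T + 1 ≤ X2.sum (partitionCost2 s T) := h1
      omega
    have hnone1 : (none : Option (Fin m)) ∈ X1 := (hcover none).resolve_right hnone
    set I := Finset.univ.filter (fun i => some i ∈ X2) with hI
    have hX2 : X2 = I.image some := by
      ext x
      cases x with
      | none => simp [hnone]
      | some i => simp [hI]
    have hval2 : X2.sum (partitionVal s) = ∑ i ∈ I, s i := by
      rw [hX2, Finset.sum_image (by simp)]; rfl
    have hcost2 : X2.sum (partitionCost2 s T) = ∑ i ∈ I, s i := by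
      rw [hX2, Finset.sum_image (by simp)]; rfl
    have htot : X1.sum (partitionVal s) + X2.sum (partitionVal s) = 2 * T := by
      rw [← Finset.sum_union hdisj]
      have hU : X1 ∪ X2 = Finset.univ := by
        ext x; simpa using hcover x
      rw [hU, ← hsum, Fintype.sum_option]
      simp [partitionVal]
    have hle : X1.sum (partitionVal s) ≤ X2.sum (partitionVal s) := by
      have h := hE1 none hnone1
      rwa [Finset.sum_erase _ (by rfl)] at h
    exact ⟨I, by omega⟩
  · rintro ⟨I, hIT⟩
    refine ⟨(I.image some)ᶜ, I.image some, disjoint_compl_left,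
      fun x => by by_cases h : x ∈ I.image some <;> simp [h], ?_, ?_, ?_⟩
    all_goals
      have hval2 : (I.image some).sum (partitionVal s) = T := by
        rw [Finset.sum_image (by simp)]; exact hIT
      have hval1 : ((I.image some)ᶜ).sum (partitionVal s) = T := by
        have h := Finset.sum_add_sum_compl (I.image some) (partitionVal s)
        rw [Fintype.sum_option] at h
        have h2 : (I.image some).sum (partitionVal s) +
            (I.image some)ᶜ.sum (partitionVal s) = 0 + ∑ i, s i := h
        omega
    · 
      intro x hx
      calc ((I.image some).erase x).sum (partitionVal s)
          ≤ (I.image some).sum (partitionVal s) :=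
            Finset.sum_le_sum_of_subset (Finset.erase_subset _ _)
        _ = ((I.image some)ᶜ).sum (partitionVal s) := by rw [hval1, hval2]
    · have hval1 : ((I.image some)ᶜ).sum (partitionVal s) = T := by
        have h := Finset.sum_add_sum_compl (I.image some) (partitionVal s)
        rw [Fintype.sum_option] at h
        have h2 : (I.image some).sum (partitionVal s) +
            (I.image some)ᶜ.sum (partitionVal s) = 0 + ∑ i, s i := h
        omega
      intro x hx
      calc (((I.image some)ᶜ).erase x).sum (partitionVal s)
          ≤ ((I.image some)ᶜ).sum (partitionVal s) :=
            Finset.sum_le_sum_of_subset (Finset.erase_subset _ _)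
        _ = (I.image some).sum (partitionVal s) := by rw [hval1, hval2]
    · have hc1 : ((I.image some)ᶜ).sum (partitionCost1 m) = 0 :=
        Finset.sum_eq_zero (fun _ _ => rfl)
      have hc2 : (I.image some).sum (partitionCost2 s T) = T := by
        rw [Finset.sum_image (by simp)]; exact hIT
      omega
end

section
/- Let m ≥ 2 be even, let s_1, …, s_m be positive integers with Σ_{i=1}^m s_i = 2T, and set B = (m+1)(2T+1). Construct an instance with two agents and item set M = {x_1, …, x_m, x_min}, where the shared additive valuation is v(x_i) = s_i + B for i ∈ {1,…,m} and v(x_min) = T + 1, and the restricted costs are c_1(S) = 0 · v(S) and c_2(S) = 1 · v(S). Then there exists an EFx allocation (X_1, X_2) of M with total cost c_2(X_2) = v(X_2) ≤ (m/2)·B + T if and only if there exists a subset I ⊆ {1,…,m} with 2|I| = m and Σ_{i ∈ I} s_i = T. -/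
/-- Shared additive valuation of the constructed instance: item `some i` (i.e. `x_i`) has
value `s i + B` where `B = (m+1)(2T+1)`, and the extra item `none` (i.e. `x_min`) has value
`T + 1`. -/
def ecpVal {m : ℕ} (s : Fin m → ℕ) (T : ℕ) : Option (Fin m) → ℕ :=
  fun x => x.elim (T + 1) (fun i => s i + (m + 1) * (2 * T + 1))

lemma ecpVal_sum {m T : ℕ} (s : Fin m → ℕ) (X : Finset (Option (Fin m))) :
    X.sum (ecpVal s T) =
      (∑ i ∈ X.eraseNone, s i) + X.eraseNone.card * ((m + 1) * (2 * T + 1))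
        + (if none ∈ X then T + 1 else 0) := by
  classical
  have h1 : ∑ i ∈ X.eraseNone, (s i + (m + 1) * (2 * T + 1))
      = ∑ x ∈ X, Option.elim' 0 (fun i => s i + (m + 1) * (2 * T + 1)) x :=
    Finset.sum_eraseNone _ _
  have h2 : ∑ i ∈ X.eraseNone, (s i + (m + 1) * (2 * T + 1))
      = (∑ i ∈ X.eraseNone, s i) + X.eraseNone.card * ((m + 1) * (2 * T + 1)) := by
    rw [Finset.sum_add_distrib, Finset.sum_const, smul_eq_mul]
  have h3 : ∀ x : Option (Fin m), ecpVal s T x =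
      Option.elim' 0 (fun i => s i + (m + 1) * (2 * T + 1)) x
        + (if x = none then T + 1 else 0) := by
    rintro (_ | i) <;> simp [ecpVal, Option.elim']
  calc X.sum (ecpVal s T)
      = ∑ x ∈ X, (Option.elim' 0 (fun i => s i + (m + 1) * (2 * T + 1)) x
          + (if x = none then T + 1 else 0)) := Finset.sum_congr rfl (fun x _ => h3 x)
    _ = _ := by
        rw [Finset.sum_add_distrib, ← h1, h2, Finset.sum_ite_eq' X none (fun _ => T + 1)]

/-- For an even `m ≥ 2` and positive integers `s_1, …, s_m` with `Σ s_i = 2T`,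
with `B = (m+1)(2T+1)`, the constructed two-agent instance with restricted cost factors
`α₁ = 0`, `α₂ = 1` admits an EFx allocation `(X₁, X₂)` with total cost
`v(X₂) ≤ (m/2)·B + T` iff there is a subset `I` with `2|I| = m` and `Σ_{i ∈ I} s_i = T`. -/
theorem equal_cardinality_partition_reduction
    {m T : ℕ} (hm : 2 ≤ m) (heven : Even m)
    (s : Fin m → ℕ) (hpos : ∀ i, 0 < s i)
    (hsum : ∑ i, s i = 2 * T) :
    (∃ X1 X2 : Finset (Option (Fin m)),
        Disjoint X1 X2 ∧ (∀ x : Option (Fin m), x ∈ X1 ∨ x ∈ X2) ∧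
        (∀ x ∈ X2, (X2.erase x).sum (ecpVal s T) ≤ X1.sum (ecpVal s T)) ∧
        (∀ x ∈ X1, (X1.erase x).sum (ecpVal s T) ≤ X2.sum (ecpVal s T)) ∧
        X2.sum (ecpVal s T) ≤ (m / 2) * ((m + 1) * (2 * T + 1)) + T) ↔
      ∃ I : Finset (Fin m), 2 * I.card = m ∧ ∑ i ∈ I, s i = T := by
  classical
  set B := (m + 1) * (2 * T + 1) with hBdef
  obtain ⟨h, hh⟩ := heven
  have hm2 : m = 2 * h := by omega
  have hdiv : m / 2 = h := by omega
  have hmT : m ≤ 2 * T := by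
    calc m = ∑ _i : Fin m, 1 := by simp
    _ ≤ ∑ i, s i := Finset.sum_le_sum (fun i _ => hpos i)
    _ = 2 * T := hsum
  have hB : 6 * T + 3 ≤ B := by
    calc 6 * T + 3 = 3 * (2 * T + 1) := by ring
    _ ≤ (m + 1) * (2 * T + 1) := Nat.mul_le_mul_right _ (by omega)
  constructor
  · rintro ⟨X1, X2, hdisj, htot, hefx2, hefx1, hcost⟩
    rw [hdiv] at hcost
    -- basic structure
    have hcomp : X1.eraseNone = (X2.eraseNone)ᶜ := by
      ext i
      simp only [Finset.mem_eraseNone, Finset.mem_compl]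
      constructor
      · intro h1 h2
        exact (Finset.disjoint_left.mp hdisj h1) h2
      · intro h2
        exact (htot (some i)).resolve_right h2
    have hnone : (none ∈ X1 ∧ none ∉ X2) ∨ (none ∉ X1 ∧ none ∈ X2) := by
      rcases htot none with h1 | h2
      · exact Or.inl ⟨h1, Finset.disjoint_left.mp hdisj h1⟩
      · exact Or.inr ⟨fun h1 => Finset.disjoint_left.mp hdisj h1 h2, h2⟩
    set I := X2.eraseNone with hIdef
    set S2 := ∑ i ∈ I, s i with hS2
    set S1 := ∑ i ∈ Iᶜ, s i with hS1
    set k := I.card with hk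
    set k1 := Iᶜ.card with hk1
    have hSsum : S2 + S1 = 2 * T := by
      rw [hS2, hS1, Finset.sum_add_sum_compl, hsum]
    have hksum : k + k1 = m := by
      rw [hk, hk1, Finset.card_add_card_compl, Fintype.card_fin]
    set E2 := (if (none : Option (Fin m)) ∈ X2 then T + 1 else 0) with hE2
    set E1 := (if (none : Option (Fin m)) ∈ X1 then T + 1 else 0) with hE1
    have hEsum : E1 + E2 = T + 1 := by
      rcases hnone with ⟨h1, h2⟩ | ⟨h1, h2⟩ <;> simp [hE1, hE2, h1, h2]
    have hv2 : X2.sum (ecpVal s T) = S2 + k * B + E2 := ecpVal_sum s X2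
    have hv1 : X1.sum (ecpVal s T) = S1 + k1 * B + E1 := by
      rw [ecpVal_sum s X1, hcomp]
    -- k ≤ h
    have hkle : k ≤ h := by
      by_contra hlt
      push_neg at hlt
      have h1 : h * B + B ≤ k * B := by
        calc h * B + B = (h + 1) * B := by ring
        _ ≤ k * B := Nat.mul_le_mul_right _ hlt
      have h2 : k * B ≤ h * B + T := by omega
      omega
    -- k ≥ h
    have hkge : h ≤ k := by
      by_contra hlt
      push_neg at hlt
      have hk12 : k + 2 ≤ k1 := by omega
      have hne : Iᶜ.Nonempty := Finset.card_pos.mp (by omega)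
      obtain ⟨i, hi⟩ := hne
      have hiX1 : some i ∈ X1 := by
        rw [← hcomp] at hi
        exact Finset.mem_eraseNone.mp hi
      have hEF := hefx1 (some i) hiX1
      have herase : (X1.erase (some i)).sum (ecpVal s T) + (s i + B)
          = X1.sum (ecpVal s T) := Finset.sum_erase_add X1 _ hiX1
      have hsi : s i ≤ 2 * T := by
        rw [← hsum]
        exact Finset.single_le_sum (fun j _ => Nat.zero_le _) (Finset.mem_univ i)
      have hp : k * B + 2 * B ≤ k1 * B := by
        calc k * B + 2 * B = (k + 2) * B := by ring
        _ ≤ k1 * B := Nat.mul_le_mul_right _ hk12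
      omega
    have hkh : k = h := le_antisymm hkle hkge
    -- none ∈ X1, S2 ≤ T
    have hS2le : S2 + E2 ≤ T := by
      have : S2 + k * B + E2 ≤ h * B + T := by omega
      rw [hkh] at this
      omega
    have hnX2 : none ∉ X2 := by
      intro hn
      simp [hE2, hn] at hS2le
      omega
    have hnX1 : none ∈ X1 := (htot none).resolve_right hnX2
    -- EFx with x_min gives S1 ≤ S2
    have hEF := hefx1 none hnX1
    have herase : (X1.erase none).sum (ecpVal s T) + (T + 1)
        = X1.sum (ecpVal s T) := Finset.sum_erase_add X1 _ hnX1
    have hE1val : E1 = T + 1 := by simp [hE1, hnX1]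
    have hE2val : E2 = 0 := by simp [hE2, hnX2]
    have hk1h : k1 = h := by omega
    rw [hv1, hE1val, hk1h] at herase
    rw [hv2, hE2val, hkh] at hEF
    have hS1le : S1 ≤ S2 := by omega
    refine ⟨I, by omega, by omega⟩
  · rintro ⟨I, hcard, hsumI⟩
    have hkh : I.card = h := by omega
    have hccard : Iᶜ.card = h := by
      have := Finset.card_add_card_compl I
      rw [Fintype.card_fin] at this
      omega
    have hcsum : ∑ i ∈ Iᶜ, s i = T := by
      have := Finset.sum_add_sum_compl I s
      rw [hsum, hsumI] at this
      omega
    refine ⟨Finset.insertNone Iᶜ, I.map Function.Embedding.some, ?_, ?_, ?_, ?_, ?_⟩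
    · rw [Finset.disjoint_left]
      rintro x hx1 hx2
      rw [Finset.mem_map] at hx2
      obtain ⟨i, hi, rfl⟩ := hx2
      rw [Finset.mem_insertNone] at hx1
      simp only [Option.mem_def, Option.some.injEq] at hx1
      have := hx1 i rfl
      rw [Finset.mem_compl] at this
      exact this hi
    · rintro (_ | i)
      · left; simp [Finset.mem_insertNone]
      · by_cases hiI : i ∈ I
        · right; simp [Finset.mem_map, hiI]
        · left
          rw [Finset.mem_insertNone]
          simp only [Option.mem_def, Option.some.injEq]
          rintro a rfl
          simpa using hiI
    · -- EFx for items in X2 = I.map some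
      intro x hx
      rw [Finset.mem_map] at hx
      obtain ⟨i, hi, rfl⟩ := hx
      have hv2 : (I.map Function.Embedding.some).sum (ecpVal s T) = T + h * B := by
        rw [Finset.sum_map]
        simp only [Function.Embedding.some_apply]
        show ∑ i ∈ I, (s i + B) = T + h * B
        rw [Finset.sum_add_distrib, hsumI, Finset.sum_const, smul_eq_mul, hkh]
      have hv1 : (Finset.insertNone Iᶜ).sum (ecpVal s T) = (T + 1) + (T + h * B) := by
        rw [Finset.sum_insertNone]
        show (T + 1) + ∑ i ∈ Iᶜ, (s i + B) = (T + 1) + (T + h * B)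
        rw [Finset.sum_add_distrib, hcsum, Finset.sum_const, smul_eq_mul, hccard]
      have herase : ((I.map Function.Embedding.some).erase (Function.Embedding.some i)).sum (ecpVal s T)
          + (s i + B) = (I.map Function.Embedding.some).sum (ecpVal s T) :=
        Finset.sum_erase_add _ _ (by simp [Finset.mem_map, hi])
      have hsi := hpos i
      rw [hv1]
      omega
    · -- EFx for items in X1 = Finset.insertNone Iᶜ
      intro x hx
      have hv2 : (I.map Function.Embedding.some).sum (ecpVal s T) = T + h * B := by
        rw [Finset.sum_map]
        simp only [Function.Embedding.some_apply]
        show ∑ i ∈ I, (s i + B) = T + h * B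
        rw [Finset.sum_add_distrib, hsumI, Finset.sum_const, smul_eq_mul, hkh]
      have hv1 : (Finset.insertNone Iᶜ).sum (ecpVal s T) = (T + 1) + (T + h * B) := by
        rw [Finset.sum_insertNone]
        show (T + 1) + ∑ i ∈ Iᶜ, (s i + B) = (T + 1) + (T + h * B)
        rw [Finset.sum_add_distrib, hcsum, Finset.sum_const, smul_eq_mul, hccard]
      have herase : ((Finset.insertNone Iᶜ).erase x).sum (ecpVal s T) + ecpVal s T x
          = (Finset.insertNone Iᶜ).sum (ecpVal s T) := Finset.sum_erase_add _ _ hx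
      rw [hv1] at herase
      rw [hv2]
      rcases x with _ | i
      · have : ecpVal s T none = T + 1 := rfl
        omega
      · have hval : ecpVal s T (some i) = s i + B := rfl
        have hsi : s i ≤ 2 * T := by
          rw [← hsum]
          exact Finset.single_le_sum (fun j _ => Nat.zero_le _) (Finset.mem_univ i)
        omega
    · rw [hdiv]
      have hv2 : (I.map Function.Embedding.some).sum (ecpVal s T) = T + h * B := by
        rw [Finset.sum_map]
        simp only [Function.Embedding.some_apply]
        show ∑ i ∈ I, (s i + B) = T + h * B
        rw [Finset.sum_add_distrib, hsumI, Finset.sum_const, smul_eq_mul, hkh]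
      omega
end

section
/- Let B ≥ 1 and n ≥ 1 be integers and let s(1), …, s(m) be positive integers with s(i) ≤ B for all i and Σ_{i=1}^m s(i) = n·B. Construct an instance with n+1 agents and item set M = {x_1, …, x_m, x_{m+1}, x_{m+2}}, where the shared additive valuation is v(x_i) = s(i) for i ∈ {1,…,m} and v(x_{m+1}) = v(x_{m+2}) = B, and the restricted cost factors are α_1 = 0 and α_i = 1 for all i ∈ {2,…,n+1}. Then there exists an EFx allocation X = (X_1, …, X_{n+1}) of M with total cost Σ_{i=2}^{n+1} v(X_i) ≤ n·B if and only if {1,…,m} can be partitioned into n pairwise disjoint sets S_1, …, S_n with Σ_{i ∈ S_j} s(i) = B for every j ∈ {1,…,n}. -/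
/-- Shared additive valuation of the constructed bin-packing instance: item `inl i`
(i.e. `x_i`) has value `s i`, and the two extra items `inr _` (i.e. `x_{m+1}, x_{m+2}`)
have value `B`. -/
def binVal {m : ℕ} (s : Fin m → ℕ) (B : ℕ) : Fin m ⊕ Fin 2 → ℕ :=
  Sum.elim s (fun _ => B)

theorem binPack_fwd {m B n : ℕ} (hB : 1 ≤ B) (hn : 1 ≤ n)
    (s : Fin m → ℕ) (hpos : ∀ i, 0 < s i) (hle : ∀ i, s i ≤ B)
    (hsum : ∑ i, s i = n * B)
    (X : Fin (n + 1) → Finset (Fin m ⊕ Fin 2))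
    (hd : ∀ i j : Fin (n + 1), i ≠ j → Disjoint (X i) (X j))
    (hc : ∀ x : Fin m ⊕ Fin 2, ∃ i : Fin (n + 1), x ∈ X i)
    (hefx : ∀ i j : Fin (n + 1), ∀ x ∈ X j,
          ((X j).erase x).sum (binVal s B) ≤ (X i).sum (binVal s B))
    (hcost : ∑ i ∈ Finset.univ.erase (0 : Fin (n + 1)), (X i).sum (binVal s B) ≤ n * B) :
      ∃ S : Fin n → Finset (Fin m),
        (∀ j k : Fin n, j ≠ k → Disjoint (S j) (S k)) ∧
        (∀ i : Fin m, ∃ j : Fin n, i ∈ S j) ∧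
        (∀ j : Fin n, ∑ i ∈ S j, s i = B) := by
  classical
  set V := binVal s B with hV
  have hVle : ∀ x, V x ≤ B := by rintro (i | k) <;> simp [hV, binVal, hle]
  -- total value
  have hbiU : Finset.univ.biUnion X = (Finset.univ : Finset (Fin m ⊕ Fin 2)) := by
    apply Finset.eq_univ_of_forall
    intro x
    obtain ⟨i, hi⟩ := hc x
    exact Finset.mem_biUnion.mpr ⟨i, Finset.mem_univ i, hi⟩
  have htot : ∑ i : Fin (n+1), (X i).sum V = n * B + 2 * B := by
    have h1 : ∑ i : Fin (n+1), (X i).sum V = (Finset.univ.biUnion X).sum V :=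
      (Finset.sum_biUnion (fun i _ j _ hij => hd i j hij)).symm
    rw [h1, hbiU]
    have h2 : ∑ x : Fin m ⊕ Fin 2, V x = (∑ i, s i) + 2 * B := by
      rw [Fintype.sum_sum_type]
      simp [hV, binVal]
    rw [h2, hsum]
  have hsplit : (X 0).sum V + ∑ i ∈ Finset.univ.erase (0 : Fin (n+1)), (X i).sum V
      = n * B + 2 * B := by
    rw [← htot]
    exact Finset.add_sum_erase _ (fun i => (X i).sum V) (Finset.mem_univ _)
  have hX0ge : 2 * B ≤ (X 0).sum V := by omega
  have hcard_erase : (Finset.univ.erase (0 : Fin (n+1))).card = n := by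
    rw [Finset.card_erase_of_mem (Finset.mem_univ _), Finset.card_univ, Fintype.card_fin]
    omega
  -- every item in X 0 has value exactly B
  have hval : ∀ x ∈ X 0, V x = B := by
    intro x hx
    have hEx : V x + ((X 0).erase x).sum V = (X 0).sum V := Finset.add_sum_erase _ V hx
    have hnE : n * (((X 0).erase x).sum V) ≤ n * B := by
      calc n * (((X 0).erase x).sum V)
          = (Finset.univ.erase (0 : Fin (n+1))).card • (((X 0).erase x).sum V) := by
            rw [hcard_erase, smul_eq_mul]
        _ ≤ ∑ i ∈ Finset.univ.erase (0 : Fin (n+1)), (X i).sum V :=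
            Finset.card_nsmul_le_sum _ _ _ (fun i _ => hefx i 0 x hx)
        _ ≤ n * B := hcost
    have := hVle x
    nlinarith [hX0ge, hEx, hnE, hn]
  -- X 0 is nonempty, indeed card 2 eventually
  have hX0sum_card : (X 0).sum V = (X 0).card * B := by
    rw [Finset.sum_congr rfl hval, Finset.sum_const, smul_eq_mul]
  have hcard_ge : 2 ≤ (X 0).card :=
    Nat.le_of_mul_le_mul_right (hX0sum_card ▸ hX0ge) (by omega)
  -- each other bundle has value ≥ B
  have hBle : ∀ i : Fin (n+1), i ≠ 0 → B ≤ (X i).sum V := by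
    intro i hi
    obtain ⟨x, hx⟩ := Finset.card_pos.mp (by omega : 0 < (X 0).card)
    have hEx : V x + ((X 0).erase x).sum V = (X 0).sum V := Finset.add_sum_erase _ V hx
    have h1 : B ≤ ((X 0).erase x).sum V := by
      have := hval x hx
      omega
    exact le_trans h1 (hefx i 0 x hx)
  -- so sum over erase is exactly n*B, and each is exactly B
  have hsum_erase : ∑ i ∈ Finset.univ.erase (0 : Fin (n+1)), (X i).sum V = n * B := by
    have h1 : n * B ≤ ∑ i ∈ Finset.univ.erase (0 : Fin (n+1)), (X i).sum V := by
      calc n * B = (Finset.univ.erase (0 : Fin (n+1))).card • B := by rw [hcard_erase, smul_eq_mul]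
        _ ≤ _ := Finset.card_nsmul_le_sum _ _ _ (fun i hi => hBle i (Finset.mem_erase.mp hi).1)
    omega
  have hX0sum : (X 0).sum V = 2 * B := by omega
  have hcard2 : (X 0).card = 2 :=
    Nat.eq_of_mul_eq_mul_right (by omega) (hX0sum_card.symm.trans hX0sum)
  have heach : ∀ i : Fin (n+1), i ≠ 0 → (X i).sum V = B := by
    intro i hi
    have hmem : i ∈ Finset.univ.erase (0 : Fin (n+1)) := Finset.mem_erase.mpr ⟨hi, Finset.mem_univ _⟩
    have h1 : (X i).sum V + ∑ j ∈ (Finset.univ.erase (0 : Fin (n+1))).erase i, (X j).sum V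
        = ∑ j ∈ Finset.univ.erase (0 : Fin (n+1)), (X j).sum V :=
      Finset.add_sum_erase _ (fun j => (X j).sum V) hmem
    have h2 : (n - 1) * B ≤ ∑ j ∈ (Finset.univ.erase (0 : Fin (n+1))).erase i, (X j).sum V := by
      have hc2 : ((Finset.univ.erase (0 : Fin (n+1))).erase i).card = n - 1 := by
        rw [Finset.card_erase_of_mem hmem, hcard_erase]
      calc (n - 1) * B = ((Finset.univ.erase (0 : Fin (n+1))).erase i).card • B := by
            rw [hc2, smul_eq_mul]
        _ ≤ _ := Finset.card_nsmul_le_sum _ _ _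
            (fun j hj => hBle j (Finset.mem_erase.mp (Finset.mem_erase.mp hj).2).1)
    have h3 := hBle i hi
    have h4 : (n - 1) * B + B = n * B := by
      have hn1 : n - 1 + 1 = n := by omega
      calc (n - 1) * B + B = ((n - 1) + 1) * B := by ring
        _ = n * B := by rw [hn1]
    omega
  -- the sets L and D
  set L : Finset (Fin m) := Finset.univ.filter (fun i => Sum.inl i ∈ X 0) with hL
  set R : Finset (Fin 2) := Finset.univ.filter (fun k => Sum.inr k ∈ X 0) with hR
  set D : Finset (Fin 2) := Finset.univ.filter (fun k => Sum.inr k ∉ X 0) with hD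
  have hLB : ∀ i ∈ L, s i = B := by
    intro i hi
    have : Sum.inl i ∈ X 0 := (Finset.mem_filter.mp hi).2
    simpa [hV, binVal] using hval _ this
  have hX0decomp : X 0 = L.image Sum.inl ∪ R.image Sum.inr := by
    ext x
    cases x with
    | inl i => simp [hL, hR, Finset.mem_union, Finset.mem_image]
    | inr k => simp [hL, hR, Finset.mem_union, Finset.mem_image]
  have hLRcard : L.card + R.card = 2 := by
    have hdis : Disjoint (L.image Sum.inl) (R.image Sum.inr) := by
      rw [Finset.disjoint_left]
      rintro x hx hx'
      obtain ⟨a, -, rfl⟩ := Finset.mem_image.mp hx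
      obtain ⟨b, -, hb⟩ := Finset.mem_image.mp hx'
      simp at hb
    have := Finset.card_union_of_disjoint hdis
    rw [← hX0decomp] at this
    rw [Finset.card_image_of_injective _ Sum.inl_injective,
        Finset.card_image_of_injective _ Sum.inr_injective] at this
    omega
  have hDRcard : R.card + D.card = 2 := by
    have := Finset.card_filter_add_card_filter_not
      (s := (Finset.univ : Finset (Fin 2))) (fun k => Sum.inr k ∈ X 0)
    simpa [hR, hD] using this
  have hcardLD : D.card = L.card := by omega
  -- the matching
  let e : {k // k ∈ D} ≃ {i // i ∈ L} := Finset.equivOfCardEq hcardLD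
  -- the replacement function
  set f : (Fin m ⊕ Fin 2) → Finset (Fin m) := fun x =>
    match x with
    | .inl i => {i}
    | .inr k => if h : k ∈ D then {(e ⟨k, h⟩ : Fin m)} else ∅ with hf
  set S : Fin n → Finset (Fin m) := fun j => (X j.succ).biUnion f with hS
  -- membership characterization
  have hmemS : ∀ (j : Fin n) (i : Fin m), i ∈ S j ↔
      (Sum.inl i ∈ X j.succ ∨ ∃ (k : Fin 2) (h : k ∈ D),
        Sum.inr k ∈ X j.succ ∧ (e ⟨k, h⟩ : Fin m) = i) := by
    intro j i
    show i ∈ (X j.succ).biUnion f ↔ _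
    simp only [Finset.mem_biUnion]
    constructor
    · rintro ⟨x, hx, hix⟩
      cases x with
      | inl i' =>
        simp only [hf, Finset.mem_singleton] at hix
        subst hix
        exact Or.inl hx
      | inr k =>
        by_cases h : k ∈ D
        · simp only [hf, dif_pos h, Finset.mem_singleton] at hix
          exact Or.inr ⟨k, h, hx, hix.symm⟩
        · simp [hf, dif_neg h] at hix
    · rintro (h | ⟨k, h, hk, rfl⟩)
      · exact ⟨Sum.inl i, h, by simp [hf]⟩
      · exact ⟨Sum.inr k, hk, by simp [hf, dif_pos h]⟩
  have heL : ∀ (k : Fin 2) (h : k ∈ D), Sum.inl (e ⟨k, h⟩ : Fin m) ∈ X 0 := by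
    intro k h
    exact (Finset.mem_filter.mp (e ⟨k, h⟩).2).2
  refine ⟨S, ?_, ?_, ?_⟩
  · -- disjointness
    intro j j' hjj'
    have hsne : j.succ ≠ j'.succ := fun h => hjj' (Fin.succ_injective _ h)
    rw [Finset.disjoint_left]
    intro i hij hij'
    rw [hmemS] at hij hij'
    rcases hij with h1 | ⟨k, hk, hk1, hk2⟩ <;> rcases hij' with h2 | ⟨k', hk', hk1', hk2'⟩
    · exact (Finset.disjoint_left.mp (hd _ _ hsne)) h1 h2
    · have : Sum.inl i ∈ X 0 := hk2' ▸ heL k' hk'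
      exact (Finset.disjoint_left.mp (hd _ _ (Fin.succ_ne_zero j))) h1 this
    · have : Sum.inl i ∈ X 0 := hk2 ▸ heL k hk
      exact (Finset.disjoint_left.mp (hd _ _ (Fin.succ_ne_zero j'))) h2 this
    · have hkk : k = k' := by
        have : e ⟨k, hk⟩ = e ⟨k', hk'⟩ := Subtype.ext (hk2.trans hk2'.symm)
        exact Subtype.mk_eq_mk.mp (e.injective this)
      subst hkk
      exact (Finset.disjoint_left.mp (hd _ _ hsne)) hk1 hk1'
  · -- coverage
    intro i
    obtain ⟨t, ht⟩ := hc (Sum.inl i)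
    by_cases h0 : t = 0
    · subst h0
      have hiL : i ∈ L := by rw [hL]; exact Finset.mem_filter.mpr ⟨Finset.mem_univ _, ht⟩
      set kk := e.symm ⟨i, hiL⟩ with hkk
      have hkD : (kk : Fin 2) ∈ D := kk.2
      have hknot : Sum.inr (kk : Fin 2) ∉ X 0 := (Finset.mem_filter.mp hkD).2
      obtain ⟨t', ht'⟩ := hc (Sum.inr (kk : Fin 2))
      have ht'0 : t' ≠ 0 := fun h => hknot (h ▸ ht')
      refine ⟨t'.pred ht'0, ?_⟩
      rw [hmemS]
      refine Or.inr ⟨(kk : Fin 2), hkD, ?_, ?_⟩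
      · rwa [Fin.succ_pred]
      · have : (⟨(kk : Fin 2), hkD⟩ : {k // k ∈ D}) = kk := Subtype.ext rfl
        rw [this, hkk, e.apply_symm_apply]
    · refine ⟨t.pred h0, ?_⟩
      rw [hmemS]
      exact Or.inl (by rwa [Fin.succ_pred])
  · -- sums
    intro j
    have hdisf : ∀ x ∈ X j.succ, ∀ y ∈ X j.succ, x ≠ y → Disjoint (f x) (f y) := by
      intro x hx y hy hxy
      rw [Finset.disjoint_left]
      intro i hix hiy
      cases x with
      | inl a =>
        simp only [hf, Finset.mem_singleton] at hix
        subst hix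
        cases y with
        | inl b =>
          simp only [hf, Finset.mem_singleton] at hiy
          exact hxy (by rw [hiy])
        | inr k =>
          by_cases h : k ∈ D
          · simp only [hf, dif_pos h, Finset.mem_singleton] at hiy
            have h1 : Sum.inl i ∈ X 0 := hiy ▸ heL k h
            exact (Finset.disjoint_left.mp (hd _ _ (Fin.succ_ne_zero j))) hx h1
          · simp [hf, dif_neg h] at hiy
      | inr k =>
        by_cases h : k ∈ D
        · simp only [hf, dif_pos h, Finset.mem_singleton] at hix
          cases y with
          | inl b =>
            simp only [hf, Finset.mem_singleton] at hiy
            subst hiy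
            have h1 : Sum.inl i ∈ X 0 := by rw [hix]; exact heL k h
            exact (Finset.disjoint_left.mp (hd _ _ (Fin.succ_ne_zero j))) hy h1
          | inr k' =>
            by_cases h' : k' ∈ D
            · simp only [hf, dif_pos h', Finset.mem_singleton] at hiy
              have : e ⟨k, h⟩ = e ⟨k', h'⟩ := Subtype.ext (hix.symm.trans hiy)
              have hkk : k = k' := Subtype.mk_eq_mk.mp (e.injective this)
              exact hxy (by rw [hkk])
            · simp [hf, dif_neg h'] at hiy
        · simp [hf, dif_neg h] at hix
    show ((X j.succ).biUnion f).sum s = B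
    rw [Finset.sum_biUnion (by
      intro x hx y hy hxy
      exact hdisf x hx y hy hxy)]
    have hfv : ∀ x ∈ X j.succ, (f x).sum s = V x := by
      intro x hx
      cases x with
      | inl a => simp [hf, hV, binVal]
      | inr k =>
        have hkD : k ∈ D := by
          rw [hD]
          refine Finset.mem_filter.mpr ⟨Finset.mem_univ _, fun h0 => ?_⟩
          exact (Finset.disjoint_left.mp (hd _ _ (Fin.succ_ne_zero j))) hx h0
        simp only [hf, dif_pos hkD, Finset.sum_singleton]
        have : (e ⟨k, hkD⟩ : Fin m) ∈ L := (e ⟨k, hkD⟩).2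
        rw [hLB _ this]
        simp [hV, binVal]
    rw [Finset.sum_congr rfl hfv]
    exact heach j.succ (Fin.succ_ne_zero j)


theorem binPack_rev {m B n : ℕ} (hB : 1 ≤ B) (hn : 1 ≤ n)
    (s : Fin m → ℕ) (hle : ∀ i, s i ≤ B)
    (S : Fin n → Finset (Fin m))
    (hSd : ∀ j k : Fin n, j ≠ k → Disjoint (S j) (S k))
    (hScov : ∀ i : Fin m, ∃ j : Fin n, i ∈ S j)
    (hSsum : ∀ j : Fin n, ∑ i ∈ S j, s i = B) :
    (∃ X : Fin (n + 1) → Finset (Fin m ⊕ Fin 2),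
        (∀ i j : Fin (n + 1), i ≠ j → Disjoint (X i) (X j)) ∧
        (∀ x : Fin m ⊕ Fin 2, ∃ i : Fin (n + 1), x ∈ X i) ∧
        (∀ i j : Fin (n + 1), ∀ x ∈ X j,
          ((X j).erase x).sum (binVal s B) ≤ (X i).sum (binVal s B)) ∧
        ∑ i ∈ Finset.univ.erase (0 : Fin (n + 1)), (X i).sum (binVal s B) ≤ n * B) := by
  classical
  set V := binVal s B with hV
  set X : Fin (n+1) → Finset (Fin m ⊕ Fin 2) :=
    fun j => if h : j = 0 then {Sum.inr 0, Sum.inr 1} else (S (j.pred h)).image Sum.inl with hX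
  have hX0 : X 0 = {Sum.inr 0, Sum.inr 1} := dif_pos rfl
  have hXne : ∀ (j) (h : j ≠ 0), X j = (S (j.pred h)).image Sum.inl := fun j h => dif_neg h
  have hpairsum : ({Sum.inr 0, Sum.inr 1} : Finset (Fin m ⊕ Fin 2)).sum V = 2 * B := by
    rw [Finset.sum_pair (by simp : (Sum.inr 0 : Fin m ⊕ Fin 2) ≠ Sum.inr 1)]
    simp [hV, binVal]; ring
  have hsumne : ∀ (j) (h : j ≠ 0), (X j).sum V = B := by
    intro j h
    rw [hXne j h, Finset.sum_image (fun a _ b _ h => Sum.inl_injective h)]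
    simpa [hV, binVal] using hSsum (j.pred h)
  have hsum0 : (X 0).sum V = 2 * B := by rw [hX0, hpairsum]
  refine ⟨X, ?_, ?_, ?_, ?_⟩
  · intro i j hij
    rw [Finset.disjoint_left]
    intro x hxi hxj
    by_cases hi : i = 0 <;> by_cases hj : j = 0
    · exact hij (hi.trans hj.symm)
    · rw [hXne j hj] at hxj
      obtain ⟨a, -, rfl⟩ := Finset.mem_image.mp hxj
      rw [hi, hX0] at hxi; simp at hxi
    · rw [hXne i hi] at hxi
      obtain ⟨a, -, rfl⟩ := Finset.mem_image.mp hxi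
      rw [hj, hX0] at hxj; simp at hxj
    · rw [hXne i hi] at hxi
      rw [hXne j hj] at hxj
      obtain ⟨a, ha, rfl⟩ := Finset.mem_image.mp hxi
      obtain ⟨b, hb, hba⟩ := Finset.mem_image.mp hxj
      have : b = a := Sum.inl_injective hba
      subst this
      have hne : i.pred hi ≠ j.pred hj := by
        intro h
        apply hij
        rw [← Fin.succ_pred i hi, ← Fin.succ_pred j hj, h]
      exact (Finset.disjoint_left.mp (hSd _ _ hne)) ha hb
  · rintro (i | k)
    · obtain ⟨j, hj⟩ := hScov i
      refine ⟨j.succ, ?_⟩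
      rw [hXne j.succ (Fin.succ_ne_zero j)]
      exact Finset.mem_image_of_mem _ (by rwa [Fin.pred_succ])
    · refine ⟨0, ?_⟩
      rw [hX0]
      fin_cases k <;> simp
  · intro i j x hx
    have hiB : B ≤ (X i).sum V := by
      by_cases hi : i = 0
      · rw [hi, hsum0]; omega
      · rw [hsumne i hi]
    refine le_trans ?_ hiB
    by_cases hj : j = 0
    · subst hj
      have hxB : V x = B := by
        rw [hX0] at hx
        simp only [Finset.mem_insert, Finset.mem_singleton] at hx
        rcases hx with rfl | rfl <;> simp [hV, binVal]
      have h1 : V x + ((X 0).erase x).sum V = (X 0).sum V := Finset.add_sum_erase _ V hx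
      omega
    · calc ((X j).erase x).sum V ≤ (X j).sum V :=
            Finset.sum_le_sum_of_subset (Finset.erase_subset _ _)
      _ = B := hsumne j hj
  · have h1 : ∀ i ∈ Finset.univ.erase (0 : Fin (n+1)), (X i).sum V = B := fun i hi =>
      hsumne i (Finset.mem_erase.mp hi).1
    rw [Finset.sum_congr rfl h1, Finset.sum_const, smul_eq_mul]
    have h2 : (Finset.univ.erase (0 : Fin (n+1))).card = n := by
      rw [Finset.card_erase_of_mem (Finset.mem_univ _), Finset.card_univ, Fintype.card_fin]
      omega
    rw [h2]


/-- For `B ≥ 1`, `n ≥ 1` and positive integers `s(1), …, s(m)` with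
`s(i) ≤ B` and `Σ s(i) = n·B`, the constructed instance with `n+1` agents and restricted
cost factors `α₁ = 0` and `α_i = 1` (i ≥ 2) admits an EFx allocation with total cost
`Σ_{i=2}^{n+1} v(X_i) ≤ n·B` iff the items can be partitioned into `n` bins each of
total size exactly `B`. -/
theorem tight_bin_packing_reduction
    {m B n : ℕ} (hB : 1 ≤ B) (hn : 1 ≤ n)
    (s : Fin m → ℕ) (hpos : ∀ i, 0 < s i) (hle : ∀ i, s i ≤ B)
    (hsum : ∑ i, s i = n * B) :
    (∃ X : Fin (n + 1) → Finset (Fin m ⊕ Fin 2),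
        (∀ i j : Fin (n + 1), i ≠ j → Disjoint (X i) (X j)) ∧
        (∀ x : Fin m ⊕ Fin 2, ∃ i : Fin (n + 1), x ∈ X i) ∧
        (∀ i j : Fin (n + 1), ∀ x ∈ X j,
          ((X j).erase x).sum (binVal s B) ≤ (X i).sum (binVal s B)) ∧
        ∑ i ∈ Finset.univ.erase (0 : Fin (n + 1)), (X i).sum (binVal s B) ≤ n * B) ↔
      ∃ S : Fin n → Finset (Fin m),
        (∀ j k : Fin n, j ≠ k → Disjoint (S j) (S k)) ∧
        (∀ i : Fin m, ∃ j : Fin n, i ∈ S j) ∧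
        (∀ j : Fin n, ∑ i ∈ S j, s i = B) := by
  constructor
  · rintro ⟨X, hd, hc, hefx, hcost⟩
    exact binPack_fwd hB hn s hpos hle hsum X hd hc hefx hcost
  · rintro ⟨S, hSd, hScov, hSsum⟩
    exact binPack_rev hB hn s hle S hSd hScov hSsum
end

section
/- Let B ≥ 1 and n ≥ 1 be integers and let s(1), …, s(m) be positive integers with s(i) ≤ B for all i and Σ_{i=1}^m s(i) = n·B. Construct the item set M = {x_1, …, x_m, x_{m+1}, x_{m+2}} with shared additive valuation v(x_i) = s(i) for i ∈ {1,…,m} and v(x_{m+1}) = v(x_{m+2}) = B. Then every EFx allocation X = (X_1, …, X_{n+1}) of M among n+1 agents that satisfies Σ_{i=2}^{n+1} v(X_i) ≤ n·B in fact satisfies v(X_1) = 2B and v(X_i) = B for every i ∈ {2,…,n+1}. -/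
/-- For `B ≥ 1`, `n ≥ 1` and positive integers `s(1), …, s(m)` with
`s(i) ≤ B` and `Σ s(i) = n·B`, every EFx allocation `X` of the constructed item set among
`n+1` agents satisfying `Σ_{i=2}^{n+1} v(X_i) ≤ n·B` in fact has `v(X_1) = 2B` and
`v(X_i) = B` for every `i ∈ {2, …, n+1}`. -/
theorem tight_bin_packing_structure
    {m B n : ℕ} (hB : 1 ≤ B) (hn : 1 ≤ n)
    (s : Fin m → ℕ) (hpos : ∀ i, 0 < s i) (hle : ∀ i, s i ≤ B)
    (hsum : ∑ i, s i = n * B)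
    (X : Fin (n + 1) → Finset (Fin m ⊕ Fin 2))
    (hdisj : ∀ i j : Fin (n + 1), i ≠ j → Disjoint (X i) (X j))
    (hcover : ∀ x : Fin m ⊕ Fin 2, ∃ i : Fin (n + 1), x ∈ X i)
    (hefx : ∀ i j : Fin (n + 1), ∀ x ∈ X j,
      ((X j).erase x).sum (binVal s B) ≤ (X i).sum (binVal s B))
    (hcost : ∑ i ∈ Finset.univ.erase (0 : Fin (n + 1)), (X i).sum (binVal s B) ≤ n * B) :
    (X 0).sum (binVal s B) = 2 * B ∧
      ∀ i : Fin (n + 1), i ≠ 0 → (X i).sum (binVal s B) = B := by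
  set v := binVal s B with hv
  set f : Fin (n + 1) → ℕ := fun i => (X i).sum v with hf
  have hfi : ∀ i, f i = (X i).sum v := fun i => rfl
  have hcost' : ∑ i ∈ Finset.univ.erase (0 : Fin (n + 1)), f i ≤ n * B := hcost
  -- every item has value at most B
  have hvle : ∀ x, v x ≤ B := by
    rintro (i | j)
    · exact hle i
    · exact le_refl B
  -- the bundles cover everything
  have hpart : Finset.univ.biUnion X = (Finset.univ : Finset (Fin m ⊕ Fin 2)) := by
    apply Finset.eq_univ_of_forall
    intro x
    obtain ⟨i, hi⟩ := hcover x
    exact Finset.mem_biUnion.2 ⟨i, Finset.mem_univ i, hi⟩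
  -- total value
  have htot : ∑ i, f i = n * B + 2 * B := by
    have hpd : (↑(Finset.univ : Finset (Fin (n + 1))) : Set (Fin (n + 1))).PairwiseDisjoint X :=
      fun i _ j _ hij => hdisj i j hij
    have h1 : ∑ x ∈ Finset.univ.biUnion X, v x = ∑ i, f i :=
      Finset.sum_biUnion hpd
    rw [hpart] at h1
    rw [← h1]
    rw [Fintype.sum_sum_type]
    have : ∑ j : Fin 2, v (Sum.inr j) = 2 * B := by
      simp [hv, binVal, two_mul]
    simp only [hv, binVal, Sum.elim_inl] at *
    omega
  -- split off bundle 0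
  have hsplit : f 0 + ∑ i ∈ Finset.univ.erase (0 : Fin (n + 1)), f i = n * B + 2 * B := by
    rw [Finset.add_sum_erase _ f (Finset.mem_univ 0)]
    exact htot
  have h0ge : 2 * B ≤ f 0 := by omega
  -- X 0 is nonempty
  have hne : (X 0).Nonempty := by
    rw [Finset.nonempty_iff_ne_empty]
    intro h
    have : f 0 = 0 := by simp [hf, h]
    omega
  obtain ⟨x, hx⟩ := hne
  -- each other bundle has value at least B
  have hBle : ∀ i : Fin (n + 1), i ≠ 0 → B ≤ f i := by
    intro i hi
    have h1 : ((X 0).erase x).sum v + v x = (X 0).sum v := Finset.sum_erase_add _ _ hx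
    have h2 := hefx i 0 x hx
    have h3 := hvle x
    have h4 := hfi i
    have h5 := hfi 0
    omega
  -- sum of the other bundles is at least n * B
  have hcard : (Finset.univ.erase (0 : Fin (n + 1))).card = n := by
    rw [Finset.card_erase_of_mem (Finset.mem_univ 0), Finset.card_univ, Fintype.card_fin]
    omega
  have hge : n * B ≤ ∑ i ∈ Finset.univ.erase (0 : Fin (n + 1)), f i := by
    calc n * B = (Finset.univ.erase (0 : Fin (n + 1))).card • B := by rw [hcard, smul_eq_mul]
    _ ≤ ∑ i ∈ Finset.univ.erase (0 : Fin (n + 1)), f i :=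
        Finset.card_nsmul_le_sum _ _ _ (fun i hi => hBle i (Finset.ne_of_mem_erase hi))
  have hSeq : ∑ i ∈ Finset.univ.erase (0 : Fin (n + 1)), f i = n * B := le_antisymm hcost' hge
  refine ⟨by have := hfi 0; omega, ?_⟩
  intro i hi
  have hfieq := hfi i
  have hiE : i ∈ Finset.univ.erase (0 : Fin (n + 1)) :=
    Finset.mem_erase.2 ⟨hi, Finset.mem_univ i⟩
  have hsplit2 : f i + ∑ j ∈ (Finset.univ.erase (0 : Fin (n + 1))).erase i, f j = n * B := by
    rw [Finset.add_sum_erase _ f hiE]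
    exact hSeq
  have hcard2 : ((Finset.univ.erase (0 : Fin (n + 1))).erase i).card = n - 1 := by
    rw [Finset.card_erase_of_mem hiE, hcard]
  have hge2 : (n - 1) * B ≤ ∑ j ∈ (Finset.univ.erase (0 : Fin (n + 1))).erase i, f j := by
    calc (n - 1) * B = ((Finset.univ.erase (0 : Fin (n + 1))).erase i).card • B := by
          rw [hcard2, smul_eq_mul]
    _ ≤ _ := Finset.card_nsmul_le_sum _ _ _
          (fun j hj => hBle j (Finset.ne_of_mem_erase (Finset.mem_of_mem_erase hj)))
  have hnB : (n - 1) * B + B = n * B := by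
    cases n with
    | zero => omega
    | succ k => simp [Nat.succ_sub_one, Nat.succ_mul]
  have := hBle i hi
  omega
end

section
/- Let s_1, …, s_m be positive integers with Σ_{i=1}^m s_i = 2T and let ρ ≥ 1 be a natural number. Construct an instance with three agents and item set M = {x_1, …, x_m, x_{m+1}, x_{m+2}, x*}, where the shared additive valuation is v(x_i) = s_i for i ∈ {1,…,m}, v(x_{m+1}) = v(x_{m+2}) = 0, and v(x*) = T, and the additive costs on single items are: c_1(x*) = c_1(x_{m+2}) = ρ and c_1(x) = 0 otherwise; c_2(x*) = c_2(x_{m+1}) = ρ and c_2(x) = 0 otherwise; c_3(x*) = 1 and c_3(x) = ρ for every other item x. If there exists a subset I ⊆ {1,…,m} with Σ_{i ∈ I} s_i = T, then there exists an EFx allocation (X_1, X_2, X_3) of M with total cost c_1(X_1) + c_2(X_2) + c_3(X_3) ≤ 1. -/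
/-- Shared additive valuation of the constructed instance: item `inl i` (i.e. `x_i`) has
value `s i`, items `inr 0, inr 1` (i.e. `x_{m+1}, x_{m+2}`) have value `0`, and item
`inr 2` (i.e. `x*`) has value `T`. -/
def gapVal {m : ℕ} (s : Fin m → ℕ) (T : ℕ) : Fin m ⊕ Fin 3 → ℕ :=
  Sum.elim s ![0, 0, T]

/-- Agent-specific additive costs of the constructed instance:
`c₁(x*) = c₁(x_{m+2}) = ρ` and `c₁ = 0` otherwise; `c₂(x*) = c₂(x_{m+1}) = ρ` and
`c₂ = 0` otherwise; `c₃(x*) = 1` and `c₃(x) = ρ` for every other item. -/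
def gapCost (m ρ : ℕ) : Fin 3 → (Fin m ⊕ Fin 3) → ℕ :=
  ![Sum.elim (fun _ => 0) ![0, ρ, ρ],
    Sum.elim (fun _ => 0) ![ρ, 0, ρ],
    Sum.elim (fun _ => ρ) ![ρ, ρ, 1]]

/-- completeness: For positive integers `s_1, …, s_m` with `Σ s_i = 2T` and
`ρ ≥ 1`, if some subset of the `s_i` sums to `T`, then the constructed three-agent instance
admits an EFx allocation of total cost `c₁(X₁) + c₂(X₂) + c₃(X₃) ≤ 1`. -/
theorem gap_reduction_completeness
    {m T ρ : ℕ} (hρ : 1 ≤ ρ)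
    (s : Fin m → ℕ) (hpos : ∀ i, 0 < s i)
    (hsum : ∑ i, s i = 2 * T)
    (hpart : ∃ I : Finset (Fin m), ∑ i ∈ I, s i = T) :
    ∃ X : Fin 3 → Finset (Fin m ⊕ Fin 3),
      (∀ i j : Fin 3, i ≠ j → Disjoint (X i) (X j)) ∧
      (∀ x : Fin m ⊕ Fin 3, ∃ i : Fin 3, x ∈ X i) ∧
      (∀ i j : Fin 3, ∀ x ∈ X j,
        ((X j).erase x).sum (gapVal s T) ≤ (X i).sum (gapVal s T)) ∧
      ∑ i : Fin 3, (X i).sum (gapCost m ρ i) ≤ 1 := by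
  obtain ⟨I, hI⟩ := hpart
  set X : Fin 3 → Finset (Fin m ⊕ Fin 3) :=
    ![(I.image Sum.inl) ∪ {Sum.inr 0}, (Iᶜ.image Sum.inl) ∪ {Sum.inr 1}, {Sum.inr 2}]
    with hX
  have hIc : ∑ i ∈ Iᶜ, s i = T := by
    have := Finset.sum_add_sum_compl I s
    omega
  have hval : ∀ i : Fin 3, (X i).sum (gapVal s T) = T := by
    intro i
    fin_cases i <;> simp [hX, Finset.sum_union, Finset.sum_image, gapVal, hI, hIc]
  refine ⟨X, ?_, ?_, ?_, ?_⟩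
  · intro i j hij
    fin_cases i <;> fin_cases j <;> first
      | exact absurd rfl hij
      | (simp [hX, Finset.disjoint_left]; try aesop)
  · intro x
    rcases x with i | k
    · by_cases h : i ∈ I
      · exact ⟨0, by simp [hX, h]⟩
      · exact ⟨1, by simp [hX, h]⟩
    · fin_cases k
      · exact ⟨0, by simp [hX]⟩
      · exact ⟨1, by simp [hX]⟩
      · exact ⟨2, by simp [hX]⟩
  · intro i j x hx
    calc ((X j).erase x).sum (gapVal s T) ≤ (X j).sum (gapVal s T) :=
          Finset.sum_le_sum_of_subset (Finset.erase_subset _ _)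
      _ = T := hval j
      _ = (X i).sum (gapVal s T) := (hval i).symm
  · have : ∑ i : Fin 3, (X i).sum (gapCost m ρ i) = 1 := by
      simp [hX, Fin.sum_univ_three, Finset.sum_union, Finset.sum_image, gapCost]
    omega
end

section
/- Let s_1, …, s_m be positive integers with Σ_{i=1}^m s_i = 2T and let ρ ≥ 1 be a natural number. Construct an instance with three agents and item set M = {x_1, …, x_m, x_{m+1}, x_{m+2}, x*}, where the shared additive valuation is v(x_i) = s_i for i ∈ {1,…,m}, v(x_{m+1}) = v(x_{m+2}) = 0, and v(x*) = T, and the additive costs on single items are: c_1(x*) = c_1(x_{m+2}) = ρ and c_1(x) = 0 otherwise; c_2(x*) = c_2(x_{m+1}) = ρ and c_2(x) = 0 otherwise; c_3(x*) = 1 and c_3(x) = ρ for every other item x. If no subset I ⊆ {1,…,m} satisfies Σ_{i ∈ I} s_i = T, then every EFx allocation (X_1, X_2, X_3) of M has total cost c_1(X_1) + c_2(X_2) + c_3(X_3) ≥ ρ. -/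
/-- soundness: For positive integers `s_1, …, s_m` with `Σ s_i = 2T` and
`ρ ≥ 1`, if no subset of the `s_i` sums to `T`, then every EFx allocation of the
constructed three-agent instance has total cost `c₁(X₁) + c₂(X₂) + c₃(X₃) ≥ ρ`. -/
theorem gap_reduction_soundness
    {m T ρ : ℕ} (hρ : 1 ≤ ρ)
    (s : Fin m → ℕ) (hpos : ∀ i, 0 < s i)
    (hsum : ∑ i, s i = 2 * T)
    (hnopart : ¬ ∃ I : Finset (Fin m), ∑ i ∈ I, s i = T)
    (X : Fin 3 → Finset (Fin m ⊕ Fin 3))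
    (hdisj : ∀ i j : Fin 3, i ≠ j → Disjoint (X i) (X j))
    (hcover : ∀ x : Fin m ⊕ Fin 3, ∃ i : Fin 3, x ∈ X i)
    (hefx : ∀ i j : Fin 3, ∀ x ∈ X j,
      ((X j).erase x).sum (gapVal s T) ≤ (X i).sum (gapVal s T)) :
    ρ ≤ ∑ i : Fin 3, (X i).sum (gapCost m ρ i) := by
  by_contra h
  push_neg at h
  have key : ∀ i : Fin 3, ∀ x ∈ X i, gapCost m ρ i x < ρ := by
    intro i x hx
    calc gapCost m ρ i x ≤ (X i).sum (gapCost m ρ i) :=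
          Finset.single_le_sum (fun _ _ => Nat.zero_le _) hx
      _ ≤ ∑ i, (X i).sum (gapCost m ρ i) :=
          Finset.single_le_sum (f := fun k => (X k).sum (gapCost m ρ k)) (fun _ _ => Nat.zero_le _) (Finset.mem_univ i)
      _ < ρ := h
  -- placements of the three special items
  have h0 : Sum.inr (0 : Fin 3) ∈ X 0 := by
    obtain ⟨i, hi⟩ := hcover (Sum.inr 0)
    have hk := key i _ hi
    fin_cases i
    · exact hi
    · simp [gapCost, Matrix.vecHead, Matrix.vecTail] at hk
    · simp [gapCost, Matrix.vecHead, Matrix.vecTail] at hk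
  have h1 : Sum.inr (1 : Fin 3) ∈ X 1 := by
    obtain ⟨i, hi⟩ := hcover (Sum.inr 1)
    have hk := key i _ hi
    fin_cases i
    · simp [gapCost, Matrix.vecHead, Matrix.vecTail] at hk
    · exact hi
    · simp [gapCost, Matrix.vecHead, Matrix.vecTail] at hk
  have h2 : Sum.inr (2 : Fin 3) ∈ X 2 := by
    obtain ⟨i, hi⟩ := hcover (Sum.inr 2)
    have hk := key i _ hi
    fin_cases i
    · simp [gapCost, Matrix.vecHead, Matrix.vecTail] at hk
    · simp [gapCost, Matrix.vecHead, Matrix.vecTail] at hk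
    · exact hi
  have hL2 : ∀ i : Fin m, Sum.inl i ∉ X 2 := by
    intro i hi
    have hk := key 2 _ hi
    simp [gapCost, Matrix.vecHead, Matrix.vecTail] at hk
  -- value of a bundle k ≠ 2 is the sum of its inl part
  have hval : ∀ k : Fin 3, k ≠ 2 → (X k).sum (gapVal s T) = ∑ i ∈ (X k).toLeft, s i := by
    intro k hk
    conv_lhs => rw [← Finset.toLeft_disjSum_toRight (u := X k)]
    rw [Finset.sum_disjSum]
    have hz : ∑ j ∈ (X k).toRight, gapVal s T (Sum.inr j) = 0 := by
      apply Finset.sum_eq_zero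
      intro j hj
      have hj' : Sum.inr j ∈ X k := Finset.mem_toRight.1 hj
      have hjne : j ≠ 2 := by
        rintro rfl
        exact (Finset.disjoint_left.1 (hdisj k 2 hk)) hj' h2
      fin_cases j
      · simp [gapVal]
      · simp [gapVal]
      · exact absurd rfl hjne
    rw [hz, add_zero]
    rfl
  -- EFx with the zero-valued dummy items forces equal values
  have e01 : (X 0).sum (gapVal s T) = (X 1).sum (gapVal s T) := by
    have a := hefx 1 0 (Sum.inr 0) h0
    have b := hefx 0 1 (Sum.inr 1) h1
    rw [Finset.sum_erase _ (by simp [gapVal] : gapVal s T (Sum.inr 0) = 0)] at a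
    rw [Finset.sum_erase _ (by simp [gapVal] : gapVal s T (Sum.inr 1) = 0)] at b
    exact le_antisymm a b
  -- the inl items split between X 0 and X 1
  have hcompl : (X 1).toLeft = (X 0).toLeftᶜ := by
    ext i
    simp only [Finset.mem_toLeft, Finset.mem_compl]
    constructor
    · intro h1i h0i
      exact (Finset.disjoint_left.1 (hdisj 0 1 (by decide))) h0i h1i
    · intro h0i
      obtain ⟨k, hk⟩ := hcover (Sum.inl i)
      fin_cases k
      · exact absurd hk h0i
      · exact hk
      · exact absurd hk (hL2 i)
  have hA : ∑ i ∈ (X 0).toLeft, s i + ∑ i ∈ (X 0).toLeftᶜ, s i = 2 * T := by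
    rw [Finset.sum_add_sum_compl]; exact hsum
  have e : ∑ i ∈ (X 0).toLeft, s i = ∑ i ∈ (X 0).toLeftᶜ, s i := by
    rw [← hcompl, ← hval 0 (by decide), ← hval 1 (by decide)]; exact e01
  exact hnopart ⟨(X 0).toLeft, by omega⟩
end

section
/- Let s_1, …, s_m be positive integers with Σ_{i=1}^m s_i = 2T. Construct an instance with three agents and item set M = {x_1, …, x_m, x_{m+1}, x_{m+2}}, where the shared additive valuation is v(x_i) = s_i for i ∈ {1,…,m} and v(x_{m+1}) = v(x_{m+2}) = T, and the restricted cost factors are α_1 = 0, α_2 = 1, α_3 = 1. If there exists a subset I ⊆ {1,…,m} with Σ_{i ∈ I} s_i = T, then there exists an EFx allocation (X_1, X_2, X_3) of M with total cost v(X_2) + v(X_3) ≤ 2T. -/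
/-- Shared additive valuation of the constructed instance: item `inl i` (i.e. `x_i`) has
value `s i`, and the two extra items `inr _` (i.e. `x_{m+1}, x_{m+2}`) have value `T`. -/
def rgapVal {m : ℕ} (s : Fin m → ℕ) (T : ℕ) : Fin m ⊕ Fin 2 → ℕ :=
  Sum.elim s (fun _ => T)

/-- completeness: For positive integers `s_1, …, s_m` with `Σ s_i = 2T`, if
some subset of the `s_i` sums to `T`, then the constructed three-agent instance with
restricted cost factors `α₁ = 0, α₂ = 1, α₃ = 1` admits an EFx allocation `(X₁, X₂, X₃)`
of total cost `v(X₂) + v(X₃) ≤ 2T`. -/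
theorem restricted_gap_completeness
    {m T : ℕ}
    (s : Fin m → ℕ) (hpos : ∀ i, 0 < s i)
    (hsum : ∑ i, s i = 2 * T)
    (hpart : ∃ I : Finset (Fin m), ∑ i ∈ I, s i = T) :
    ∃ X : Fin 3 → Finset (Fin m ⊕ Fin 2),
      (∀ i j : Fin 3, i ≠ j → Disjoint (X i) (X j)) ∧
      (∀ x : Fin m ⊕ Fin 2, ∃ i : Fin 3, x ∈ X i) ∧
      (∀ i j : Fin 3, ∀ x ∈ X j,
        ((X j).erase x).sum (rgapVal s T) ≤ (X i).sum (rgapVal s T)) ∧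
      (X 1).sum (rgapVal s T) + (X 2).sum (rgapVal s T) ≤ 2 * T := by
  obtain ⟨I, hI⟩ := hpart
  set f := rgapVal s T with hf
  set e : Fin m ↪ (Fin m ⊕ Fin 2) := ⟨Sum.inl, Sum.inl_injective⟩ with he
  set A0 : Finset (Fin m ⊕ Fin 2) := {Sum.inr 0, Sum.inr 1} with hA0
  set A1 : Finset (Fin m ⊕ Fin 2) := I.map e with hA1
  set A2 : Finset (Fin m ⊕ Fin 2) := Iᶜ.map e with hA2
  have hIc : ∑ i ∈ Iᶜ, s i = T := by
    have := Finset.sum_add_sum_compl I s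
    omega
  have h01 : (Sum.inr 0 : Fin m ⊕ Fin 2) ≠ Sum.inr 1 := by
    simp [Fin.ext_iff]
  have w0 : A0.sum f = 2 * T := by
    rw [hA0, Finset.sum_pair h01]
    simp [hf, rgapVal, two_mul]
  have w1 : A1.sum f = T := by
    rw [hA1, Finset.sum_map]
    simpa [hf, rgapVal, he] using hI
  have w2 : A2.sum f = T := by
    rw [hA2, Finset.sum_map]
    simpa [hf, rgapVal, he] using hIc
  -- erase bounds
  have her0 : ∀ x ∈ A0, (A0.erase x).sum f ≤ T := by
    intro x hx
    have hsub : (A0.erase x).sum f + f x = A0.sum f := Finset.sum_erase_add _ _ hx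
    have hxT : f x = T := by
      rw [hA0] at hx
      simp only [Finset.mem_insert, Finset.mem_singleton] at hx
      rcases hx with rfl | rfl <;> simp [hf, rgapVal]
    omega
  have her1 : ∀ x ∈ A1, (A1.erase x).sum f ≤ T := by
    intro x hx
    calc (A1.erase x).sum f ≤ A1.sum f :=
          Finset.sum_le_sum_of_subset (Finset.erase_subset x A1)
      _ = T := w1
  have her2 : ∀ x ∈ A2, (A2.erase x).sum f ≤ T := by
    intro x hx
    calc (A2.erase x).sum f ≤ A2.sum f :=
          Finset.sum_le_sum_of_subset (Finset.erase_subset x A2)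
      _ = T := w2
  -- disjointness facts
  have d01 : Disjoint A0 A1 := by
    rw [Finset.disjoint_left]
    intro x hx hx'
    rw [hA1, Finset.mem_map] at hx'
    obtain ⟨y, _, rfl⟩ := hx'
    rw [hA0] at hx
    simp [he] at hx
  have d02 : Disjoint A0 A2 := by
    rw [Finset.disjoint_left]
    intro x hx hx'
    rw [hA2, Finset.mem_map] at hx'
    obtain ⟨y, _, rfl⟩ := hx'
    rw [hA0] at hx
    simp [he] at hx
  have d12 : Disjoint A1 A2 := by
    rw [hA1, hA2, Finset.disjoint_map]
    exact disjoint_compl_right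
  set X : Fin 3 → Finset (Fin m ⊕ Fin 2) := ![A0, A1, A2] with hX
  have hX0 : X 0 = A0 := rfl
  have hX1 : X 1 = A1 := rfl
  have hX2 : X 2 = A2 := rfl
  have hge : ∀ i : Fin 3, T ≤ (X i).sum f := by
    intro i
    fin_cases i
    · show T ≤ A0.sum f; rw [w0]; omega
    · show T ≤ A1.sum f; rw [w1]
    · show T ≤ A2.sum f; rw [w2]
  have her : ∀ j : Fin 3, ∀ x ∈ X j, ((X j).erase x).sum f ≤ T := by
    intro j
    fin_cases j
    · exact her0
    · exact her1
    · exact her2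
  refine ⟨X, ?_, ?_, ?_, ?_⟩
  · intro i j hij
    fin_cases i <;> fin_cases j <;>
      first
        | exact absurd rfl hij
        | exact d01 | exact d02 | exact d12
        | exact d01.symm | exact d02.symm | exact d12.symm
  · intro x
    rcases x with i | k
    · by_cases hi : i ∈ I
      · exact ⟨1, by rw [hX1, hA1]; exact Finset.mem_map_of_mem e hi⟩
      · exact ⟨2, by rw [hX2, hA2]; exact Finset.mem_map_of_mem e (Finset.mem_compl.mpr hi)⟩
    · refine ⟨0, ?_⟩
      rw [hX0, hA0]
      fin_cases k <;> simp
  · intro i j x hx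
    exact le_trans (her j x hx) (hge i)
  · rw [hX1, hX2, w1, w2]; omega
end

section
/- Let m ≥ 1, let s_1, …, s_m be positive integers with Σ_{i=1}^m s_i = 2T, and let ε ≥ 0 be a rational number such that s_i ≤ 2T/m + ε for every i and 2T/m + ε < T. Construct an instance with three agents and item set M = {x_1, …, x_m, x_{m+1}, x_{m+2}}, where the shared additive valuation is v(x_i) = s_i for i ∈ {1,…,m} and v(x_{m+1}) = v(x_{m+2}) = T, and the restricted cost factors are α_1 = 0, α_2 = 1, α_3 = 1. If no subset I ⊆ {1,…,m} satisfies Σ_{i ∈ I} s_i = T, then every EFx allocation (X_1, X_2, X_3) of M has total cost v(X_2) + v(X_3) ≥ 8T/3 − 2T/m − ε (as rational numbers). -/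
/-- soundness: Let `m ≥ 1`, let `s_1, …, s_m` be positive integers with
`Σ s_i = 2T`, and let `ε ≥ 0` be rational with `s_i ≤ 2T/m + ε` for all `i` and
`2T/m + ε < T`. If no subset of the `s_i` sums to `T`, then every EFx allocation
`(X₁, X₂, X₃)` of the constructed three-agent instance with restricted cost factors
`α₁ = 0, α₂ = 1, α₃ = 1` has total cost `v(X₂) + v(X₃) ≥ 8T/3 − 2T/m − ε`
(as rational numbers). -/
theorem restricted_gap_soundness
    {m T : ℕ} (hm : 1 ≤ m)
    (s : Fin m → ℕ) (hpos : ∀ i, 0 < s i)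
    (hsum : ∑ i, s i = 2 * T)
    (ε : ℚ) (hε : 0 ≤ ε)
    (hbound : ∀ i, (s i : ℚ) ≤ 2 * T / m + ε)
    (hsmall : 2 * (T : ℚ) / m + ε < T)
    (hnopart : ¬ ∃ I : Finset (Fin m), ∑ i ∈ I, s i = T)
    (X : Fin 3 → Finset (Fin m ⊕ Fin 2))
    (hdisj : ∀ i j : Fin 3, i ≠ j → Disjoint (X i) (X j))
    (hcover : ∀ x : Fin m ⊕ Fin 2, ∃ i : Fin 3, x ∈ X i)
    (hefx : ∀ i j : Fin 3, ∀ x ∈ X j,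
      ((X j).erase x).sum (rgapVal s T) ≤ (X i).sum (rgapVal s T)) :
    8 * (T : ℚ) / 3 - 2 * T / m - ε ≤
      ((X 1).sum (rgapVal s T) + (X 2).sum (rgapVal s T) : ℕ) := by
  have hfl : ∀ i, rgapVal s T (Sum.inl i) = s i := fun i => rfl
  have hfr : ∀ j, rgapVal s T (Sum.inr j) = T := fun j => rfl
  set f := rgapVal s T with hfdef
  obtain ⟨δ, hδdef⟩ : ∃ δ : ℚ, δ = 2 * (T:ℚ) / m + ε := ⟨_, rfl⟩
  have hmQ : (0:ℚ) < m := by exact_mod_cast hm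
  have hTQ : (0:ℚ) ≤ T := by positivity
  have hδ0 : 0 ≤ δ := by
    have h : (0:ℚ) ≤ 2 * T / m := by positivity
    rw [hδdef]; linarith
  have hδT : δ < T := by rw [hδdef]; exact hsmall
  have hc2 : ∀ b b' c : Fin 2, b ≠ b' → c = b ∨ c = b' := by decide
  have hc01 : ∀ c : Fin 2, c = 0 ∨ c = 1 := by decide
  have hjk3 : ∀ j k : Fin 3, j ≠ 0 → k ≠ 0 → k ≠ j →
      (j = 1 ∧ k = 2) ∨ (j = 2 ∧ k = 1) := by decide
  have hexk : ∀ j : Fin 3, j ≠ 0 → ∃ k : Fin 3, k ≠ 0 ∧ k ≠ j := by decide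
  have hval : ∀ x : Fin m ⊕ Fin 2, (∃ i, x = Sum.inl i) → (f x : ℚ) ≤ δ := by
    rintro x ⟨i, rfl⟩
    rw [hfl, hδdef]
    exact hbound i
  -- total value
  have htot : (∑ x ∈ X 0, f x) + (∑ x ∈ X 1, f x) + (∑ x ∈ X 2, f x) = 4 * T := by
    have hu : X 0 ∪ X 1 ∪ X 2 = Finset.univ := by
      apply Finset.eq_univ_of_forall
      intro x
      obtain ⟨i, hi⟩ := hcover x
      simp only [Finset.mem_union]
      fin_cases i
      · exact Or.inl (Or.inl hi)
      · exact Or.inl (Or.inr hi)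
      · exact Or.inr hi
    have huniv : ∑ x ∈ (Finset.univ : Finset (Fin m ⊕ Fin 2)), f x = 4 * T := by
      rw [show (Finset.univ : Finset (Fin m ⊕ Fin 2)).sum f = ∑ x : Fin m ⊕ Fin 2, f x from rfl]
      rw [Fintype.sum_sum_type, Fin.sum_univ_two]
      simp only [hfl, hfr]
      omega
    have d01 := hdisj 0 1 (by decide)
    have d2 : Disjoint (X 0 ∪ X 1) (X 2) :=
      Finset.disjoint_union_left.mpr ⟨hdisj 0 2 (by decide), hdisj 1 2 (by decide)⟩
    rw [← hu, Finset.sum_union d2, Finset.sum_union d01] at huniv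
    omega
  -- key lemma: if one big item is in X 0 and the other in X j (j ≠ 0), then V0 small
  have key : ∀ (b b' : Fin 2) (j k : Fin 3), b ≠ b' → j ≠ 0 → k ≠ 0 → k ≠ j →
      Sum.inr b ∈ X 0 → Sum.inr b' ∈ X j →
      ((∑ x ∈ X 0, f x : ℕ) : ℚ) ≤ 4 * T / 3 + δ := by
    intro b b' j k hbb hj0 hk0 hkj hb0 hb'j
    have hkSmall : ∀ x ∈ X k, ∃ i, x = Sum.inl i := by
      intro x hx
      match x with
      | Sum.inl i => exact ⟨i, rfl⟩
      | Sum.inr c =>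
        exfalso
        rcases hc2 b b' c hbb with rfl | rfl
        · exact (Finset.disjoint_left.mp (hdisj 0 k (Ne.symm hk0)) hb0) hx
        · exact (Finset.disjoint_left.mp (hdisj j k (Ne.symm hkj)) hb'j) hx
    have h0Small : ∀ x ∈ (X 0).erase (Sum.inr b), ∃ i, x = Sum.inl i := by
      intro x hx
      obtain ⟨hxne, hx0⟩ := Finset.mem_erase.mp hx
      match x with
      | Sum.inl i => exact ⟨i, rfl⟩
      | Sum.inr c =>
        exfalso
        rcases hc2 b b' c hbb with rfl | rfl
        · exact hxne rfl
        · exact (Finset.disjoint_left.mp (hdisj 0 j (Ne.symm hj0)) hx0) hb'j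
    have htot' : (∑ x ∈ X 0, f x) + (∑ x ∈ X j, f x) + (∑ x ∈ X k, f x) = 4 * T := by
      rcases hjk3 j k hj0 hk0 hkj with ⟨rfl, rfl⟩ | ⟨rfl, rfl⟩ <;> omega
    have hV0T : T ≤ ∑ x ∈ X 0, f x := by
      have := Finset.single_le_sum (f := f) (fun x _ => Nat.zero_le _) hb0
      rwa [hfr] at this
    have hsplit : f (Sum.inr b) + ∑ x ∈ (X 0).erase (Sum.inr b), f x = ∑ x ∈ X 0, f x :=
      Finset.add_sum_erase _ f hb0
    by_cases hA : ∑ x ∈ (X 0).erase (Sum.inr b), f x = 0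
    · have hV0 : ∑ x ∈ X 0, f x = T := by
        rw [← hsplit, hA, hfr]
        omega
      rw [hV0]
      linarith
    · obtain ⟨x, hx⟩ : ((X 0).erase (Sum.inr b)).Nonempty := by
        rw [Finset.nonempty_iff_ne_empty]
        intro h
        rw [h] at hA
        simp at hA
      have hx0 : x ∈ X 0 := Finset.mem_of_mem_erase hx
      have hxs : (f x : ℚ) ≤ δ := hval x (h0Small x hx)
      have he1 : ∑ y ∈ (X 0).erase x, f y ≤ ∑ y ∈ X k, f y := hefx k 0 x hx0
      have hsx : f x + ∑ y ∈ (X 0).erase x, f y = ∑ y ∈ X 0, f y :=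
        Finset.add_sum_erase _ f hx0
      have hV0k : ((∑ y ∈ X 0, f y : ℕ) : ℚ) ≤ ((∑ y ∈ X k, f y : ℕ) : ℚ) + δ := by
        have h1 : ((∑ y ∈ X 0, f y : ℕ) : ℚ) = (f x : ℕ) + ((∑ y ∈ (X 0).erase x, f y : ℕ) : ℚ) := by
          exact_mod_cast congrArg (Nat.cast (R := ℚ)) hsx.symm
        have h2 : ((∑ y ∈ (X 0).erase x, f y : ℕ) : ℚ) ≤ ((∑ y ∈ X k, f y : ℕ) : ℚ) := by
          exact_mod_cast he1
        linarith
      have hV0TQ : (T : ℚ) ≤ ((∑ y ∈ X 0, f y : ℕ) : ℚ) := by exact_mod_cast hV0T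
      have hVkpos : (0:ℚ) < ((∑ y ∈ X k, f y : ℕ) : ℚ) := by linarith
      obtain ⟨z, hz⟩ : (X k).Nonempty := by
        rw [Finset.nonempty_iff_ne_empty]
        intro h
        rw [h] at hVkpos
        simp at hVkpos
      have hzs : (f z : ℚ) ≤ δ := hval z (hkSmall z hz)
      have he2 : ∑ y ∈ (X k).erase z, f y ≤ ∑ y ∈ X j, f y := hefx j k z hz
      have hsz : f z + ∑ y ∈ (X k).erase z, f y = ∑ y ∈ X k, f y :=
        Finset.add_sum_erase _ f hz
      have hVkj : ((∑ y ∈ X k, f y : ℕ) : ℚ) ≤ ((∑ y ∈ X j, f y : ℕ) : ℚ) + δ := by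
        have h1 : ((∑ y ∈ X k, f y : ℕ) : ℚ) = (f z : ℕ) + ((∑ y ∈ (X k).erase z, f y : ℕ) : ℚ) := by
          exact_mod_cast congrArg (Nat.cast (R := ℚ)) hsz.symm
        have h2 : ((∑ y ∈ (X k).erase z, f y : ℕ) : ℚ) ≤ ((∑ y ∈ X j, f y : ℕ) : ℚ) := by
          exact_mod_cast he2
        linarith
      have htotQ : ((∑ x ∈ X 0, f x : ℕ) : ℚ) + ((∑ x ∈ X j, f x : ℕ) : ℚ)
          + ((∑ x ∈ X k, f x : ℕ) : ℚ) = 4 * T := by exact_mod_cast htot'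
      linarith
  -- main bound on V0
  have main : ((∑ x ∈ X 0, f x : ℕ) : ℚ) ≤ 4 * T / 3 + δ := by
    by_cases h0 : Sum.inr (0 : Fin 2) ∈ X 0 <;> by_cases h1 : Sum.inr (1 : Fin 2) ∈ X 0
    · -- both big items in X 0: contradiction with no-partition
      exfalso
      apply hnopart
      have h01 : (Sum.inr (0:Fin 2) : Fin m ⊕ Fin 2) ≠ Sum.inr 1 := by simp
      have hmem : Sum.inr (1:Fin 2) ∈ (X 0).erase (Sum.inr (0:Fin 2)) :=
        Finset.mem_erase.mpr ⟨by simp, h1⟩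
      have hTle : T ≤ ∑ y ∈ (X 0).erase (Sum.inr (0:Fin 2)), f y := by
        have := Finset.single_le_sum (f := f) (fun x _ => Nat.zero_le _) hmem
        rwa [hfr] at this
      have hE1 : ∑ y ∈ (X 0).erase (Sum.inr (0:Fin 2)), f y ≤ ∑ y ∈ X 1, f y :=
        hefx 1 0 _ h0
      have hE2 : ∑ y ∈ (X 0).erase (Sum.inr (0:Fin 2)), f y ≤ ∑ y ∈ X 2, f y :=
        hefx 2 0 _ h0
      have hsplit : f (Sum.inr (0:Fin 2)) + ∑ y ∈ (X 0).erase (Sum.inr (0:Fin 2)), f y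
          = ∑ y ∈ X 0, f y := Finset.add_sum_erase _ f h0
      rw [hfr] at hsplit
      have hpair : ({Sum.inr 0, Sum.inr 1} : Finset (Fin m ⊕ Fin 2)) ⊆ X 0 := by
        intro y hy
        rcases Finset.mem_insert.mp hy with rfl | hy
        · exact h0
        · rw [Finset.mem_singleton.mp hy]; exact h1
      have h2T : 2 * T ≤ ∑ x ∈ X 0, f x := by
        have hps : ∑ y ∈ ({Sum.inr 0, Sum.inr 1} : Finset (Fin m ⊕ Fin 2)), f y = 2 * T := by
          rw [Finset.sum_pair h01, hfr, hfr]
          omega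
        calc 2 * T = ∑ y ∈ ({Sum.inr 0, Sum.inr 1} : Finset (Fin m ⊕ Fin 2)), f y := hps.symm
          _ ≤ ∑ x ∈ X 0, f x := Finset.sum_le_sum_of_subset hpair
      have hV1T : ∑ x ∈ X 1, f x = T := by omega
      -- X 1 consists only of small items
      refine ⟨Finset.univ.filter (fun i => Sum.inl i ∈ X 1), ?_⟩
      have hmap : Finset.map ⟨Sum.inl, Sum.inl_injective⟩
          (Finset.univ.filter (fun i => Sum.inl i ∈ X 1)) = X 1 := by
        ext x
        simp only [Finset.mem_map, Finset.mem_filter, Finset.mem_univ, true_and,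
          Function.Embedding.coeFn_mk]
        constructor
        · rintro ⟨i, hi, rfl⟩; exact hi
        · intro hx
          match x with
          | Sum.inl i => exact ⟨i, hx, rfl⟩
          | Sum.inr c =>
            exfalso
            have hcX0 : Sum.inr c ∈ X 0 := by
              rcases hc01 c with rfl | rfl
              · exact h0
              · exact h1
            exact (Finset.disjoint_left.mp (hdisj 0 1 (by decide)) hcX0) hx
      calc ∑ i ∈ Finset.univ.filter (fun i => Sum.inl i ∈ X 1), s i
          = ∑ x ∈ Finset.map ⟨Sum.inl, Sum.inl_injective⟩
              (Finset.univ.filter (fun i => Sum.inl i ∈ X 1)), f x := by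
            rw [Finset.sum_map]
            simp only [Function.Embedding.coeFn_mk, hfl]
        _ = ∑ x ∈ X 1, f x := by rw [hmap]
        _ = T := hV1T
    · -- inr 0 ∈ X 0, inr 1 ∉ X 0
      obtain ⟨j, hj⟩ := hcover (Sum.inr 1)
      have hj0 : j ≠ 0 := by rintro rfl; exact h1 hj
      obtain ⟨k, hk0, hkj⟩ := hexk j hj0
      exact key 0 1 j k (by decide) hj0 hk0 hkj h0 hj
    · -- inr 1 ∈ X 0, inr 0 ∉ X 0
      obtain ⟨j, hj⟩ := hcover (Sum.inr 0)
      have hj0 : j ≠ 0 := by rintro rfl; exact h0 hj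
      obtain ⟨k, hk0, hkj⟩ := hexk j hj0
      exact key 1 0 j k (by decide) hj0 hk0 hkj h1 hj
    · -- no big item in X 0
      by_cases hE : X 0 = ∅
      · rw [hE]
        simp only [Finset.sum_empty, Nat.cast_zero]
        linarith
      · obtain ⟨x, hx⟩ : (X 0).Nonempty := Finset.nonempty_iff_ne_empty.mpr hE
        have hxl : ∃ i, x = Sum.inl i := by
          match x with
          | Sum.inl i => exact ⟨i, rfl⟩
          | Sum.inr c =>
            exfalso
            rcases hc01 c with rfl | rfl
            · exact h0 hx
            · exact h1 hx
        have hxs : (f x : ℚ) ≤ δ := hval x hxl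
        have he1 : ∑ y ∈ (X 0).erase x, f y ≤ ∑ y ∈ X 1, f y := hefx 1 0 x hx
        have he2 : ∑ y ∈ (X 0).erase x, f y ≤ ∑ y ∈ X 2, f y := hefx 2 0 x hx
        have hsx : f x + ∑ y ∈ (X 0).erase x, f y = ∑ y ∈ X 0, f y :=
          Finset.add_sum_erase _ f hx
        have h3 : 3 * (∑ y ∈ X 0, f y) ≤ 4 * T + 2 * f x := by omega
        have h3Q : 3 * ((∑ y ∈ X 0, f y : ℕ) : ℚ) ≤ 4 * T + 2 * ((f x : ℕ) : ℚ) := by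
          exact_mod_cast h3
        linarith
  -- conclude
  have htotQ : ((∑ x ∈ X 0, f x : ℕ) : ℚ) + ((∑ x ∈ X 1, f x : ℕ) : ℚ)
      + ((∑ x ∈ X 2, f x : ℕ) : ℚ) = 4 * T := by exact_mod_cast htot
  rw [Nat.cast_add]
  rw [hδdef] at main
  linarith
end
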